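/- arXiv:2101.01288 — 5 statements merged into one kernel-verified Lean document; each statement's English description precedes it below -/
import Mathlib

section
/- Let (φ_n)_{n≥1} be measurable functions [0,∞) → [0,∞) dominated by a measurable φ̄ with ∫₀^∞ (1+t) φ̄(t) dt < ∞ (φ_n(t) ≤ φ̄(t) for all n, t), and suppose n(1 − ‖φ_n‖_{L¹}) → b for some b ∈ ℝ and ∫₀^∞ t φ_n(t) dt → σ for some σ > 0. Fix β ≥ 0 and set φ_{β,n}(t) := e^{−βt/n} φ_n(t). Then for every λ ∈ ℝ: lim_{n→∞} n (1 − φ̂_{β,n}(λ/n)) = σβ + b − iσλ. In particular (taking λ = 0), n(1 − ‖φ_{β,n}‖_{L¹}) → σβ + b. -/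
open MeasureTheory Set Filter Topology

/-- `L¹` norm on `[0,∞)`: `‖f‖_{L¹} = ∫₀^∞ |f(t)| dt`. -/
noncomputable def L1norm (f : ℝ → ℝ) : ℝ :=
  ∫ t in Set.Ioi (0:ℝ), |f t|

/-- Fourier transform on `[0,∞)`: `f̂(λ) = ∫₀^∞ e^{iλt} f(t) dt`. -/
noncomputable def fourierT (f : ℝ → ℝ) (l : ℝ) : ℂ :=
  ∫ t in Set.Ioi (0:ℝ), Complex.exp (Complex.I * l * t) * (f t : ℂ)

lemma norm_exp_sub_one_le {w : ℂ} (hw : w.re ≤ 0) : ‖Complex.exp w - 1‖ ≤ ‖w‖ := by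
  have key : ∀ x ∈ Set.Icc (0:ℝ) 1, HasDerivWithinAt (fun s : ℝ => Complex.exp (s * w))
      (Complex.exp (x * w) * w) (Set.Icc 0 1) x := by
    intro x hx
    have h1 : HasDerivAt (fun z : ℂ => Complex.exp (z * w)) (Complex.exp (↑x * w) * w) ↑x := by
      simpa using ((hasDerivAt_id ((x:ℝ) : ℂ)).mul_const w).cexp
    exact h1.comp_ofReal.hasDerivWithinAt
  have bound : ∀ x ∈ Set.Icc (0:ℝ) 1, ‖Complex.exp (x * w) * w‖ ≤ ‖w‖ := by
    intro x hx
    rw [norm_mul, Complex.norm_exp]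
    have hre : ((x:ℂ) * w).re = x * w.re := by simp [Complex.re_ofReal_mul]
    rw [hre]
    have : Real.exp (x * w.re) ≤ 1 := by
      rw [Real.exp_le_one_iff]
      exact mul_nonpos_of_nonneg_of_nonpos hx.1 hw
    nlinarith [norm_nonneg w, Real.exp_pos (x * w.re)]
  have := (convex_Icc (0:ℝ) 1).norm_image_sub_le_of_norm_hasDerivWithin_le key bound
    (Set.left_mem_Icc.2 zero_le_one) (Set.right_mem_Icc.2 zero_le_one)
  simpa using this

lemma tendsto_nat_mul_exp_div_sub_one (c : ℂ) :
    Tendsto (fun n : ℕ => (n:ℂ) * (Complex.exp (c / n) - 1)) atTop (𝓝 c) := by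
  have hd : HasDerivAt (fun z : ℂ => Complex.exp (z * c)) c 0 := by
    simpa using ((hasDerivAt_id (0:ℂ)).mul_const c).cexp
  have hs := hasDerivAt_iff_tendsto_slope.mp hd
  have hinv : Tendsto (fun n : ℕ => ((n:ℂ))⁻¹) atTop (𝓝[≠] (0:ℂ)) := by
    apply tendsto_nhdsWithin_of_tendsto_nhds_of_eventually_within
    · have h1 : Tendsto (fun n : ℕ => ((n:ℝ))⁻¹) atTop (𝓝 0) :=
        tendsto_inv_atTop_zero.comp tendsto_natCast_atTop_atTop
      have h2 := (Complex.continuous_ofReal.tendsto 0).comp h1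
      refine h2.congr fun n => ?_
      simp [Function.comp]
    · filter_upwards [eventually_ge_atTop 1] with n hn
      have : (n:ℂ) ≠ 0 := Nat.cast_ne_zero.mpr (by omega)
      simp [this]
  have h3 := hs.comp hinv
  refine h3.congr' ?_
  filter_upwards [eventually_ge_atTop 1] with n hn
  have hn' : ((n:ℂ)) ≠ 0 := Nat.cast_ne_zero.mpr (by omega)
  simp only [Function.comp, slope_def_field]
  field_simp
  simp only [zero_mul, mul_zero, Complex.exp_zero]
  ring

/-- with `φ_{β,n}(t) = e^{−βt/n} φ_n(t)`, one has
`n(1 − φ̂_{β,n}(λ/n)) → σβ + b − iσλ` for every `λ`, and in particular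
`n(1 − ‖φ_{β,n}‖_{L¹}) → σβ + b`. -/
theorem stmt4 (φ : ℕ → ℝ → ℝ) (φbar : ℝ → ℝ) (b σ β : ℝ)
    (hφmeas : ∀ n, Measurable (φ n))
    (hφpos : ∀ n t, 0 ≤ t → 0 ≤ φ n t)
    (hφbar_meas : Measurable φbar)
    (hφbar_int : IntegrableOn (fun t => (1 + t) * φbar t) (Set.Ioi 0))
    (hdom : ∀ n t, 0 ≤ t → φ n t ≤ φbar t)
    (hblim : Tendsto (fun n : ℕ => (n : ℝ) * (1 - L1norm (φ n))) atTop (nhds b))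
    (hσ : 0 < σ)
    (hσlim : Tendsto (fun n : ℕ => ∫ t in Set.Ioi (0:ℝ), t * φ n t) atTop (nhds σ))
    (hβ : 0 ≤ β) :
    (∀ l : ℝ,
      Tendsto
        (fun n : ℕ =>
          (n : ℂ) * (1 - fourierT (fun t => Real.exp (-(β * t) / n) * φ n t) (l / n)))
        atTop (nhds (((σ * β + b : ℝ) : ℂ) - Complex.I * (σ : ℂ) * (l : ℂ)))) ∧
    Tendsto
      (fun n : ℕ => (n : ℝ) * (1 - L1norm (fun t => Real.exp (-(β * t) / n) * φ n t)))
      atTop (nhds (σ * β + b)) := by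
  have hφbar_nonneg : ∀ t ∈ Ioi (0:ℝ), 0 ≤ φbar t := fun t ht =>
    le_trans (hφpos 0 t (le_of_lt ht)) (hdom 0 t (le_of_lt ht))
  have hIbar : IntegrableOn φbar (Ioi 0) := by
    apply Integrable.mono hφbar_int hφbar_meas.aestronglyMeasurable
    filter_upwards [ae_restrict_mem measurableSet_Ioi] with t ht
    have h0 := hφbar_nonneg t ht
    have ht' : (0:ℝ) < t := ht
    rw [Real.norm_eq_abs, Real.norm_eq_abs, abs_of_nonneg h0,
      abs_of_nonneg (by nlinarith : (0:ℝ) ≤ (1+t)*φbar t)]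
    nlinarith
  have hItbar : IntegrableOn (fun t => t * φbar t) (Ioi 0) := by
    apply Integrable.mono hφbar_int ((measurable_id'.mul hφbar_meas).aestronglyMeasurable)
    filter_upwards [ae_restrict_mem measurableSet_Ioi] with t ht
    have h0 := hφbar_nonneg t ht
    have ht' : (0:ℝ) < t := ht
    show ‖t * φbar t‖ ≤ ‖(1 + t) * φbar t‖
    rw [Real.norm_eq_abs, Real.norm_eq_abs, abs_of_nonneg (by nlinarith : (0:ℝ) ≤ t*φbar t),
      abs_of_nonneg (by nlinarith : (0:ℝ) ≤ (1+t)*φbar t)]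
    nlinarith
  have hIφ : ∀ n, IntegrableOn (φ n) (Ioi 0) := by
    intro n
    apply Integrable.mono hIbar (hφmeas n).aestronglyMeasurable
    filter_upwards [ae_restrict_mem measurableSet_Ioi] with t ht
    have ht' : (0:ℝ) < t := ht
    rw [Real.norm_eq_abs, Real.norm_eq_abs, abs_of_nonneg (hφpos n t ht'.le),
      abs_of_nonneg (hφbar_nonneg t ht)]
    exact hdom n t ht'.le
  have hItφ : ∀ n, IntegrableOn (fun t => t * φ n t) (Ioi 0) := by
    intro n
    apply Integrable.mono hItbar ((measurable_id'.mul (hφmeas n)).aestronglyMeasurable)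
    filter_upwards [ae_restrict_mem measurableSet_Ioi] with t ht
    have ht' : (0:ℝ) < t := ht
    have h1 := hφpos n t ht'.le
    have h2 := hdom n t ht'.le
    show ‖t * φ n t‖ ≤ ‖t * φbar t‖
    rw [Real.norm_eq_abs, Real.norm_eq_abs, abs_of_nonneg (by nlinarith : (0:ℝ) ≤ t*φ n t),
      abs_of_nonneg (by nlinarith [hφbar_nonneg t ht] : (0:ℝ) ≤ t*φbar t)]
    nlinarith
  have hL1 : ∀ n, L1norm (φ n) = ∫ t in Ioi (0:ℝ), φ n t := by
    intro n
    unfold L1norm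
    apply integral_congr_ae
    filter_upwards [ae_restrict_mem measurableSet_Ioi] with t ht
    exact abs_of_nonneg (hφpos n t (le_of_lt ht))
  have main : ∀ l : ℝ,
      Tendsto
        (fun n : ℕ =>
          (n : ℂ) * (1 - fourierT (fun t => Real.exp (-(β * t) / n) * φ n t) (l / n)))
        atTop (nhds (((σ * β + b : ℝ) : ℂ) - Complex.I * (σ : ℂ) * (l : ℂ))) := by
    intro l
    set z : ℂ := Complex.I * l - β with hz
    have hre : ∀ (n : ℕ) (t : ℝ), (z * t / n).re = -(β * t) / n := by
      intro n t
      have h : z * t / n = Complex.I * ((l * t / n : ℝ) : ℂ) + ((-(β * t) / n : ℝ) : ℂ) := by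
        rw [hz]; push_cast; ring
      rw [h]; simp
    have hnorm_exp : ∀ (n : ℕ) (t : ℝ), ‖Complex.exp (z * t / n)‖ = Real.exp (-(β * t) / n) := by
      intro n t
      rw [Complex.norm_exp, hre]
    have hker : ∀ (n : ℕ),
        fourierT (fun t => Real.exp (-(β * t) / n) * φ n t) (l / n)
          = ∫ t in Ioi (0:ℝ), Complex.exp (z * t / n) * (φ n t : ℂ) := by
      intro n
      unfold fourierT
      refine integral_congr_ae (ae_of_all _ fun t => ?_)
      show Complex.exp (Complex.I * ((l / (n:ℝ) : ℝ) : ℂ) * (t:ℂ))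
          * ((Real.exp (-(β * t) / n) * φ n t : ℝ) : ℂ)
        = Complex.exp (z * t / n) * ((φ n t : ℝ) : ℂ)
      rw [Complex.ofReal_mul, Complex.ofReal_exp, ← mul_assoc, ← Complex.exp_add]
      congr 2
      push_cast
      ring
    have hIexp : ∀ n : ℕ, IntegrableOn (fun t : ℝ => Complex.exp (z * t / n) * (φ n t : ℂ)) (Ioi 0) := by
      intro n
      apply Integrable.mono' hIbar
      · exact ((Complex.continuous_exp.comp (by fun_prop)).measurable.mul
          (Complex.measurable_ofReal.comp (hφmeas n))).aestronglyMeasurable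
      · filter_upwards [ae_restrict_mem measurableSet_Ioi] with t ht
        have ht' : (0:ℝ) < t := ht
        rw [norm_mul, hnorm_exp, Complex.norm_real, Real.norm_eq_abs,
          abs_of_nonneg (hφpos n t ht'.le)]
        have h1 : Real.exp (-(β * t) / n) ≤ 1 := by
          rw [Real.exp_le_one_iff]
          apply div_nonpos_of_nonpos_of_nonneg
          · nlinarith
          · positivity
        have h2 := hφpos n t ht'.le
        have h3 := hdom n t ht'.le
        nlinarith
    have hIφC : ∀ n : ℕ, IntegrableOn (fun t => (φ n t : ℂ)) (Ioi 0) := fun n => (hIφ n).ofReal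
    have hItφC : ∀ n : ℕ, IntegrableOn (fun t => ((t * φ n t : ℝ) : ℂ)) (Ioi 0) :=
      fun n => (hItφ n).ofReal
    set F : ℕ → ℝ → ℂ :=
      fun n t => ((n:ℂ) * (1 - Complex.exp (z * t / n)) + z * t) * (φ n t : ℂ) with hF
    have hFeq : ∀ (n : ℕ) (t : ℝ), F n t =
        ((n:ℂ) * (φ n t : ℂ) - (n:ℂ) * (Complex.exp (z * t / n) * (φ n t : ℂ)))
          + z * ((t * φ n t : ℝ) : ℂ) := by
      intro n t; rw [hF]; push_cast; ring
    have hdecomp : ∀ n : ℕ,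
        (n : ℂ) * (1 - fourierT (fun t => Real.exp (-(β * t) / n) * φ n t) (l / n)) =
          (((n:ℝ) * (1 - L1norm (φ n)) : ℝ) : ℂ) + (∫ t in Ioi (0:ℝ), F n t)
            + (-z) * ((∫ t in Ioi (0:ℝ), t * φ n t : ℝ) : ℂ) := by
      intro n
      rw [hker n]
      have hFint : (∫ t in Ioi (0:ℝ), F n t) =
          ((n:ℂ) * ∫ t in Ioi (0:ℝ), (φ n t : ℂ))
            - ((n:ℂ) * ∫ t in Ioi (0:ℝ), Complex.exp (z * t / n) * (φ n t : ℂ))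
            + z * ∫ t in Ioi (0:ℝ), ((t * φ n t : ℝ) : ℂ) := by
        have hint1 : IntegrableOn (fun t : ℝ => (n:ℂ) * (φ n t : ℂ)
            - (n:ℂ) * (Complex.exp (z * t / n) * (φ n t : ℂ))) (Ioi 0) :=
          ((hIφC n).const_mul _).sub ((hIexp n).const_mul _)
        have hint2 : IntegrableOn (fun t : ℝ => z * ((t * φ n t : ℝ) : ℂ)) (Ioi 0) :=
          (hItφC n).const_mul z
        rw [integral_congr_ae (ae_of_all _ (hFeq n)), integral_add hint1 hint2,
          integral_sub ((hIφC n).const_mul _) ((hIexp n).const_mul _),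
          integral_const_mul, integral_const_mul, integral_const_mul]
      have hOR1 : (∫ t in Ioi (0:ℝ), ((φ n t : ℝ) : ℂ))
          = ((∫ t in Ioi (0:ℝ), φ n t : ℝ) : ℂ) := integral_ofReal
      have hOR2 : (∫ t in Ioi (0:ℝ), ((t * φ n t : ℝ) : ℂ))
          = ((∫ t in Ioi (0:ℝ), t * φ n t : ℝ) : ℂ) := integral_ofReal
      rw [hFint, hL1 n, hOR1, hOR2]
      push_cast
      ring
    have hA : Tendsto (fun n : ℕ => (((n:ℝ) * (1 - L1norm (φ n)) : ℝ) : ℂ)) atTop (𝓝 (b:ℂ)) :=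
      (Complex.continuous_ofReal.tendsto b).comp hblim
    have hC : Tendsto (fun n : ℕ => (-z) * ((∫ t in Ioi (0:ℝ), t * φ n t : ℝ) : ℂ)) atTop
        (𝓝 ((-z) * (σ:ℂ))) :=
      (((Complex.continuous_ofReal.tendsto σ).comp hσlim)).const_mul (-z)
    have hB : Tendsto (fun n : ℕ => ∫ t in Ioi (0:ℝ), F n t) atTop (𝓝 0) := by
      have h0 : (𝓝 (0:ℂ)) = 𝓝 (∫ t in Ioi (0:ℝ), (0:ℂ)) := by simp
      rw [h0]
      apply tendsto_integral_of_dominated_convergence (fun t => 2 * ‖z‖ * (t * φbar t))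
      · intro n
        apply Measurable.aestronglyMeasurable
        exact ((measurable_const.mul ((measurable_const.sub
          (Complex.continuous_exp.measurable.comp (by fun_prop))))).add (by fun_prop)).mul
          (Complex.measurable_ofReal.comp (hφmeas n))
      · exact hItbar.const_mul (2 * ‖z‖)
      · intro n
        filter_upwards [ae_restrict_mem measurableSet_Ioi] with t ht
        have ht' : (0:ℝ) < t := ht
        rw [hF]
        rw [norm_mul, Complex.norm_real, Real.norm_eq_abs, abs_of_nonneg (hφpos n t ht'.le)]
        have hφle := hdom n t ht'.le
        have hφnn := hφpos n t ht'.le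
        have hbarnn := hφbar_nonneg t ht
        have hnormzt : ‖z * (t:ℂ)‖ = ‖z‖ * t := by
          rw [norm_mul, Complex.norm_real, Real.norm_eq_abs, abs_of_nonneg ht'.le]
        have hexp : ‖(n:ℂ) * (1 - Complex.exp (z * t / n))‖ ≤ ‖z‖ * t := by
          rw [norm_mul]
          have h1 : ‖(1:ℂ) - Complex.exp (z * t / n)‖ ≤ ‖z * t / n‖ := by
            rw [← norm_neg]
            simpa using norm_exp_sub_one_le (w := z * t / n)
              (by rw [hre]; exact div_nonpos_of_nonpos_of_nonneg (by nlinarith) (by positivity))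
          have h2 : ‖z * (t:ℂ) / (n:ℂ)‖ = ‖z‖ * t / n := by
            rw [norm_div, hnormzt]; simp
          have h3 : ‖(n:ℂ)‖ * ‖(1:ℂ) - Complex.exp (z * t / n)‖ ≤ (n:ℝ) * (‖z‖ * t / n) := by
            rw [h2] at h1
            have hnn : ‖(n:ℂ)‖ = (n:ℝ) := by simp
            rw [hnn]
            exact mul_le_mul_of_nonneg_left h1 (Nat.cast_nonneg n)
          refine h3.trans ?_
          rcases Nat.eq_zero_or_pos n with h | h
          · simp [h]; positivity
          · have hn0 : (n:ℝ) ≠ 0 := Nat.cast_ne_zero.mpr (by omega)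
            rw [mul_comm, div_mul_cancel₀ _ hn0]
        have h4 : ‖(n:ℂ) * (1 - Complex.exp (z * t / n)) + z * t‖ ≤ 2 * ‖z‖ * t :=
          calc ‖(n:ℂ) * (1 - Complex.exp (z * t / n)) + z * t‖
              ≤ ‖(n:ℂ) * (1 - Complex.exp (z * t / n))‖ + ‖z * (t:ℂ)‖ := norm_add_le _ _
            _ ≤ ‖z‖ * t + ‖z‖ * t := add_le_add hexp (le_of_eq hnormzt)
            _ = 2 * ‖z‖ * t := by ring
        nlinarith [norm_nonneg ((n:ℂ) * (1 - Complex.exp (z * t / n)) + z * t)]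
      · filter_upwards [ae_restrict_mem measurableSet_Ioi] with t ht
        have ht' : (0:ℝ) < t := ht
        have h1 : Tendsto (fun n : ℕ => (n:ℂ) * (1 - Complex.exp (z * t / n)) + z * t) atTop
            (𝓝 0) := by
          have h2 := ((tendsto_nat_mul_exp_div_sub_one (z * t)).neg).add_const (z * (t:ℂ))
          have h3 : -(z * (t:ℂ)) + z * t = 0 := by ring
          rw [h3] at h2
          refine h2.congr fun n => ?_
          ring
        apply squeeze_zero_norm (a := fun n : ℕ =>
          ‖(n:ℂ) * (1 - Complex.exp (z * t / n)) + z * t‖ * φbar t)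
        · intro n
          rw [hF, norm_mul, Complex.norm_real, Real.norm_eq_abs,
            abs_of_nonneg (hφpos n t ht'.le)]
          exact mul_le_mul_of_nonneg_left (hdom n t ht'.le) (norm_nonneg _)
        · have := (h1.norm).mul_const (φbar t)
          simpa using this
    have hsum := (hA.add hB).add hC
    have hlim_eq : (b:ℂ) + 0 + (-z) * (σ:ℂ)
        = (((σ * β + b : ℝ) : ℂ)) - Complex.I * (σ:ℂ) * (l:ℂ) := by
      rw [hz]; push_cast; ring
    rw [hlim_eq] at hsum
    exact hsum.congr fun n => (hdecomp n).symm
  refine ⟨main, ?_⟩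
  have h1 := main 0
  have h2 := (Complex.continuous_re.tendsto _).comp h1
  have h3 : ((((σ * β + b : ℝ) : ℂ)) - Complex.I * (σ:ℂ) * ((0:ℝ):ℂ)).re = σ * β + b := by
    simp
  rw [h3] at h2
  refine h2.congr fun n => ?_
  have hψnn : ∀ t ∈ Ioi (0:ℝ), 0 ≤ Real.exp (-(β * t) / n) * φ n t := fun t ht =>
    mul_nonneg (Real.exp_nonneg _) (hφpos n t (le_of_lt ht))
  have hL1ψ : L1norm (fun t => Real.exp (-(β * t) / n) * φ n t)
      = ∫ t in Ioi (0:ℝ), Real.exp (-(β * t) / n) * φ n t := by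
    unfold L1norm
    apply integral_congr_ae
    filter_upwards [ae_restrict_mem measurableSet_Ioi] with t ht
    exact abs_of_nonneg (hψnn t ht)
  have hFT : fourierT (fun t => Real.exp (-(β * t) / n) * φ n t) ((0:ℝ) / n)
      = ((∫ t in Ioi (0:ℝ), Real.exp (-(β * t) / n) * φ n t : ℝ) : ℂ) := by
    unfold fourierT
    have hOR : (∫ t in Ioi (0:ℝ), ((Real.exp (-(β * t) / n) * φ n t : ℝ) : ℂ))
        = ((∫ t in Ioi (0:ℝ), Real.exp (-(β * t) / n) * φ n t : ℝ) : ℂ) := integral_ofReal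
    rw [← hOR]
    refine integral_congr_ae (ae_of_all _ fun t => ?_)
    show Complex.exp (Complex.I * (((0:ℝ) / (n:ℝ) : ℝ) : ℂ) * (t:ℂ))
        * ((Real.exp (-(β * t) / n) * φ n t : ℝ) : ℂ)
      = ((Real.exp (-(β * t) / n) * φ n t : ℝ) : ℂ)
    norm_num
  simp only [Function.comp]
  rw [hFT, ← hL1ψ]
  rw [show ((n:ℂ)) * (1 - ((L1norm (fun t => Real.exp (-(β * t) / n) * φ n t) : ℝ) : ℂ))
      = (((n:ℝ) * (1 - L1norm (fun t => Real.exp (-(β * t) / n) * φ n t)) : ℝ) : ℂ) by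
    push_cast; ring]
  rw [Complex.ofReal_re]
end

section
/- Let (φ_n)_{n≥1} be measurable functions [0,∞) → [0,∞) such that: φ_n(t) ≤ φ̄(t) for all n, t for some measurable φ̄ with ∫₀^∞ (1+t) φ̄(t) dt < ∞; sup_{n≥1} ‖φ_n‖_{TV} < ∞; n(1 − ‖φ_n‖_{L¹}) → b for some b ∈ ℝ (so in particular ‖φ_n‖_{L¹} → 1); and ∫₀^∞ t φ_n(t) dt → σ for some σ > 0. Then there exist constants δ > 0 and n₀ ∈ ℕ such that for all n ≥ n₀ and all λ ∈ ℝ: |1 − φ̂_n(λ)| ≥ δ · min(|λ|, 1). -/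
open MeasureTheory Set Filter

lemma exp_Ilt (l t : ℝ) : Complex.exp (Complex.I * l * t) = Complex.exp ((l*t : ℝ) * Complex.I) := by
  push_cast; ring_nf

lemma norm_exp_Ilt (l t : ℝ) : ‖Complex.exp (Complex.I * l * t)‖ = 1 := by
  rw [exp_Ilt, Complex.norm_exp]
  simp

lemma exp_Ilt_re (l t : ℝ) : (Complex.exp (Complex.I * l * t)).re = Real.cos (l*t) := by
  rw [exp_Ilt, Complex.exp_ofReal_mul_I_re]

lemma exp_Ilt_im (l t : ℝ) : (Complex.exp (Complex.I * l * t)).im = Real.sin (l*t) := by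
  rw [exp_Ilt, Complex.exp_ofReal_mul_I_im]

lemma integrable_kernel {f : ℝ → ℝ} (hm : Measurable f) (hi : IntegrableOn f (Set.Ioi 0)) (l : ℝ) :
    IntegrableOn (fun t : ℝ => Complex.exp (Complex.I * l * t) * (f t : ℂ)) (Set.Ioi (0:ℝ)) := by
  refine Integrable.mono' hi.norm ?_ ?_
  · exact (((Complex.measurable_exp.comp (by fun_prop)).mul
      (Complex.measurable_ofReal.comp hm))).aestronglyMeasurable
  · filter_upwards with t
    rw [norm_mul, norm_exp_Ilt, one_mul, Complex.norm_real]

lemma fourierT_re {f : ℝ → ℝ} (hm : Measurable f) (hi : IntegrableOn f (Set.Ioi 0)) (l : ℝ) :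
    (fourierT f l).re = ∫ t in Set.Ioi (0:ℝ), Real.cos (l*t) * f t := by
  rw [fourierT, ← RCLike.re_to_complex, ← integral_re (integrable_kernel hm hi l)]
  refine integral_congr_ae (Filter.Eventually.of_forall fun t => ?_)
  simp [Complex.mul_re, exp_Ilt_re]

lemma fourierT_im {f : ℝ → ℝ} (hm : Measurable f) (hi : IntegrableOn f (Set.Ioi 0)) (l : ℝ) :
    (fourierT f l).im = ∫ t in Set.Ioi (0:ℝ), Real.sin (l*t) * f t := by
  rw [fourierT, ← RCLike.im_to_complex, ← integral_im (integrable_kernel hm hi l)]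
  refine integral_congr_ae (Filter.Eventually.of_forall fun t => ?_)
  simp [Complex.mul_im, exp_Ilt_im]

lemma fourierT_neg (f : ℝ → ℝ) (l : ℝ) :
    fourierT f (-l) = starRingEnd ℂ (fourierT f l) := by
  rw [fourierT, fourierT, ← integral_conj]
  refine integral_congr_ae (Filter.Eventually.of_forall fun t => ?_)
  simp only [map_mul, ← Complex.exp_conj, Complex.conj_ofReal, map_mul, Complex.conj_I]
  push_cast
  ring_nf

lemma norm_one_sub_fourierT_neg (f : ℝ → ℝ) (l : ℝ) :
    ‖1 - fourierT f (-l)‖ = ‖1 - fourierT f l‖ := by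
  rw [fourierT_neg]
  rw [show (1 : ℂ) - starRingEnd ℂ (fourierT f l) = starRingEnd ℂ (1 - fourierT f l) by
    rw [map_sub, map_one]]
  exact RCLike.norm_conj _

lemma sin_err_small {x : ℝ} (h0 : 0 ≤ x) (h1 : x ≤ 1) : |Real.sin x - x| ≤ x^2/2 := by
  rcases eq_or_lt_of_le h0 with rfl | hx
  · simp
  · have h2 := Real.sin_gt_sub_cube hx
    have h3 := Real.sin_le h0
    rw [abs_of_nonpos (by linarith), neg_sub]
    nlinarith

lemma sin_err_big (x : ℝ) : |Real.sin x - x| ≤ 2*|x| := by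
  calc |Real.sin x - x| ≤ |Real.sin x| + |x| := abs_sub _ _
  _ ≤ |x| + |x| := by have := Real.abs_sin_le_abs (x := x); linarith
  _ = 2*|x| := by ring



lemma cos_near_lattice {x d : ℝ} (hx : 0 < x) (hd : 0 < d) (hdpi : d ≤ Real.pi)
    (h : Real.cos d < Real.cos x) :
    ∃ k : ℕ, |x - 2*Real.pi*k| < d ∧ (k:ℝ) ≤ x/(2*Real.pi) + 1/2 := by
  have hpi := Real.pi_pos
  set m : ℤ := round (x / (2*Real.pi)) with hm
  have hmb' := abs_le.1 (abs_sub_round (x / (2*Real.pi)))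
  have hy0 : (0:ℝ) < x/(2*Real.pi) := by positivity
  have hm0 : 0 ≤ m := by
    have h1 : (-1:ℝ) < (m:ℝ) := by linarith [hmb'.2]
    have h2 : (-1:ℤ) < m := by exact_mod_cast h1
    omega
  have hkey : x - 2*Real.pi*m = (2*Real.pi)*(x/(2*Real.pi) - m) := by
    field_simp
  have hxm : |x - 2*Real.pi*m| ≤ Real.pi := by
    rw [hkey, abs_mul, abs_of_pos (by linarith : (0:ℝ) < 2*Real.pi)]
    have h5 : |x/(2*Real.pi) - (m:ℝ)| ≤ 1/2 := abs_sub_round _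
    nlinarith
  have hc : Real.cos |x - 2*Real.pi*m| = Real.cos x := by
    rw [Real.cos_abs]
    have h4 := Real.cos_sub_int_mul_two_pi x m
    rw [← h4]
    ring_nf
  have hlt : |x - 2*Real.pi*m| < d := by
    by_contra hge
    push_neg at hge
    have := Real.cos_le_cos_of_nonneg_of_le_pi hd.le hxm hge
    linarith
  refine ⟨m.toNat, ?_, ?_⟩
  · rwa [show ((m.toNat : ℕ) : ℝ) = (m:ℝ) by exact_mod_cast Int.toNat_of_nonneg hm0]
  · rw [show ((m.toNat : ℕ) : ℝ) = (m:ℝ) by exact_mod_cast Int.toNat_of_nonneg hm0]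
    linarith [hmb'.1]

lemma bad_measure {lam l0 T d : ℝ} (hl0 : 0 < l0) (hlam : l0 ≤ lam) (hT : 0 < T)
    (hd : 0 < d) (hdpi : d ≤ Real.pi) :
    volume {t : ℝ | t ∈ Set.Ioc (0:ℝ) T ∧ Real.cos d < Real.cos (lam*t)} ≤
      ENNReal.ofReal (T*d/Real.pi + 3*d/l0) := by
  have hpi := Real.pi_pos
  have hlam0 : 0 < lam := hl0.trans_le hlam
  set K : ℕ := ⌊lam*T/(2*Real.pi) + 1/2⌋₊ with hK
  have hsub : {t : ℝ | t ∈ Set.Ioc (0:ℝ) T ∧ Real.cos d < Real.cos (lam*t)} ⊆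
      ⋃ k ∈ Finset.range (K+1),
        Set.Ioo ((2*Real.pi*k - d)/lam) ((2*Real.pi*k + d)/lam) := by
    rintro t ⟨⟨ht0, htT⟩, hcos⟩
    obtain ⟨k, hk1, hk2⟩ := cos_near_lattice (mul_pos hlam0 ht0) hd hdpi hcos
    have hkK : k ∈ Finset.range (K+1) := by
      rw [Finset.mem_range, Nat.lt_succ_iff]
      apply Nat.le_floor
      calc (k:ℝ) ≤ lam*t/(2*Real.pi) + 1/2 := hk2
      _ ≤ lam*T/(2*Real.pi) + 1/2 := by gcongr
    refine Set.mem_biUnion hkK ?_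
    have := abs_lt.1 hk1
    constructor
    · rw [div_lt_iff₀ hlam0]
      nlinarith [this.1]
    · rw [lt_div_iff₀ hlam0]
      nlinarith [this.2]
  calc volume {t : ℝ | t ∈ Set.Ioc (0:ℝ) T ∧ Real.cos d < Real.cos (lam*t)}
      ≤ volume (⋃ k ∈ Finset.range (K+1),
        Set.Ioo ((2*Real.pi*k - d)/lam) ((2*Real.pi*k + d)/lam)) := measure_mono hsub
  _ ≤ ∑ k ∈ Finset.range (K+1),
        volume (Set.Ioo ((2*Real.pi*k - d)/lam) ((2*Real.pi*k + d)/lam)) :=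
      measure_biUnion_finset_le _ _
  _ = ∑ k ∈ Finset.range (K+1), ENNReal.ofReal (2*d/lam) := by
      refine Finset.sum_congr rfl fun k _ => ?_
      rw [Real.volume_Ioo]
      congr 1
      field_simp
      ring
  _ = (K+1 : ℕ) * ENNReal.ofReal (2*d/lam) := by
      rw [Finset.sum_const, Finset.card_range, nsmul_eq_mul]
  _ ≤ ENNReal.ofReal (T*d/Real.pi + 3*d/l0) := by
      rw [← ENNReal.ofReal_natCast (K+1), ← ENNReal.ofReal_mul (by positivity)]
      apply ENNReal.ofReal_le_ofReal
      have hKle : (K:ℝ) ≤ lam*T/(2*Real.pi) + 1/2 := Nat.floor_le (by positivity)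
      have h1 : ((K+1:ℕ):ℝ) ≤ lam*T/(2*Real.pi) + 3/2 := by push_cast; linarith
      have h2 : (0:ℝ) ≤ 2*d/lam := by positivity
      have e1 : (lam*T/(2*Real.pi) + 3/2)*(2*d/lam) = T*d/Real.pi + 3*d/lam := by
        field_simp
      have h3 : 3*d/lam ≤ 3*d/l0 := by gcongr
      calc ((K+1:ℕ):ℝ) * (2*d/lam) ≤ (lam*T/(2*Real.pi) + 3/2)*(2*d/lam) := by gcongr
      _ = T*d/Real.pi + 3*d/lam := e1
      _ ≤ T*d/Real.pi + 3*d/l0 := by linarith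

lemma tendsto_tail {g : ℝ → ℝ} (hi : IntegrableOn g (Set.Ioi 0)) :
    Tendsto (fun N : ℕ => ∫ t in Set.Ioi ((N:ℝ)), g t) atTop (nhds (0:ℝ)) := by
  have hU : ⋃ N : ℕ, Set.Ioc (0:ℝ) (N:ℝ) = Set.Ioi 0 := by
    ext t
    simp only [Set.mem_iUnion, Set.mem_Ioc, Set.mem_Ioi]
    constructor
    · rintro ⟨N, h1, _⟩; exact h1
    · intro ht; obtain ⟨N, hN⟩ := exists_nat_ge t; exact ⟨N, ht, hN⟩
  have h1 : Tendsto (fun N : ℕ => ∫ t in Set.Ioc (0:ℝ) (N:ℝ), g t) atTop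
      (nhds (∫ t in Set.Ioi (0:ℝ), g t)) := by
    have := tendsto_setIntegral_of_monotone (fun N : ℕ => measurableSet_Ioc)
      (fun i j hij => Set.Ioc_subset_Ioc le_rfl (by exact_mod_cast hij)) (hU ▸ hi)
    rwa [hU] at this
  have h2 : ∀ N : ℕ, ∫ t in Set.Ioi ((N:ℝ)), g t =
      (∫ t in Set.Ioi (0:ℝ), g t) - ∫ t in Set.Ioc (0:ℝ) (N:ℝ), g t := by
    intro N
    have hsplit : ∫ t in Set.Ioi (0:ℝ), g t =
        (∫ t in Set.Ioc (0:ℝ) (N:ℝ), g t) + ∫ t in Set.Ioi ((N:ℝ)), g t := by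
      rw [← setIntegral_union (Set.Ioc_disjoint_Ioi le_rfl) measurableSet_Ioi
        (hi.mono_set Set.Ioc_subset_Ioi_self)
        (hi.mono_set (Set.Ioi_subset_Ioi (Nat.cast_nonneg N))),
        Set.Ioc_union_Ioi_eq_Ioi (Nat.cast_nonneg N)]
    linarith
  rw [show (0:ℝ) = (∫ t in Set.Ioi (0:ℝ), g t) - (∫ t in Set.Ioi (0:ℝ), g t) by ring]
  simp only [h2]
  exact tendsto_const_nhds.sub h1

lemma ac_bound {g : ℝ → ℝ} (hgm : Measurable g) {T : ℝ}
    (hg : IntegrableOn g (Set.Ioc 0 T)) (hgpos : ∀ t ∈ Set.Ioc (0:ℝ) T, 0 ≤ g t) :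
    ∃ η : ℝ, 0 < η ∧ ∀ A : Set ℝ, MeasurableSet A → A ⊆ Set.Ioc 0 T →
      volume A ≤ ENNReal.ofReal η → ∫ t in A, g t ≤ 1/8 := by
  have hae : ∀ᵐ t ∂(volume.restrict (Set.Ioc (0:ℝ) T)), 0 ≤ g t :=
    (ae_restrict_iff' measurableSet_Ioc).2 (Filter.Eventually.of_forall hgpos)
  have hint : ∀ M : ℕ, IntegrableOn (fun t => min (g t) M) (Set.Ioc 0 T) := by
    intro M
    refine Integrable.mono' hg.abs ((hgm.min measurable_const).aestronglyMeasurable) ?_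
    filter_upwards [hae] with t ht
    rw [Real.norm_eq_abs, abs_le]
    refine ⟨?_, (min_le_left _ _).trans (le_abs_self _)⟩
    have h0 : (0:ℝ) ≤ min (g t) M := le_min ht (Nat.cast_nonneg M)
    linarith [abs_nonneg (g t)]
  have htend : Tendsto (fun M : ℕ => ∫ t in Set.Ioc (0:ℝ) T, min (g t) M) atTop
      (nhds (∫ t in Set.Ioc (0:ℝ) T, g t)) := by
    refine integral_tendsto_of_tendsto_of_monotone hint hg ?_ ?_
    · refine Filter.Eventually.of_forall fun t => fun i j hij => ?_
      exact min_le_min le_rfl (by exact_mod_cast hij)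
    · refine Filter.Eventually.of_forall fun t => ?_
      obtain ⟨M, hM⟩ := exists_nat_ge (g t)
      refine tendsto_atTop_of_eventually_const (i₀ := M) fun i hi => ?_
      rw [min_eq_left (hM.trans (by exact_mod_cast hi))]
  have hev : ∀ᶠ M : ℕ in atTop,
      (∫ t in Set.Ioc (0:ℝ) T, g t) - (∫ t in Set.Ioc (0:ℝ) T, min (g t) M) ≤ 1/16 := by
    have h2 : Tendsto (fun M : ℕ => (∫ t in Set.Ioc (0:ℝ) T, g t) -
        (∫ t in Set.Ioc (0:ℝ) T, min (g t) M)) atTop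
        (nhds ((∫ t in Set.Ioc (0:ℝ) T, g t) - (∫ t in Set.Ioc (0:ℝ) T, g t))) :=
      tendsto_const_nhds.sub htend
    rw [sub_self] at h2
    exact h2.eventually_le_const (show (0:ℝ) < 1/16 by norm_num)
  obtain ⟨M, hM⟩ := hev.exists
  refine ⟨1/(16*(M+1)), by positivity, fun A hA hAsub hAvol => ?_⟩
  have hginA : IntegrableOn g A := hg.mono_set hAsub
  have hminA : IntegrableOn (fun t => min (g t) M) A := (hint M).mono_set hAsub
  have key1 : ∫ t in A, (g t - min (g t) M) ≤
      ∫ t in Set.Ioc (0:ℝ) T, (g t - min (g t) M) := by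
    refine setIntegral_mono_set (hg.sub (hint M)) ?_ (HasSubset.Subset.eventuallyLE hAsub)
    filter_upwards [hae] with t _
    simp [min_le_left]
  have hAfin : volume A < ⊤ := hAvol.trans_lt ENNReal.ofReal_lt_top
  have key2 : ∫ t in A, min (g t) (M:ℝ) ≤ (M:ℝ) * (volume A).toReal := by
    have hb : ∀ x ∈ A, ‖min (g x) (M:ℝ)‖ ≤ (M:ℝ) := by
      intro x hx
      rw [Real.norm_eq_abs, abs_le]
      refine ⟨?_, min_le_right _ _⟩
      have h0 : (0:ℝ) ≤ min (g x) M := le_min (hgpos x (hAsub hx)) (Nat.cast_nonneg M)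
      have : (0:ℝ) ≤ (M:ℝ) := Nat.cast_nonneg M
      linarith
    calc ∫ t in A, min (g t) (M:ℝ) ≤ ‖∫ t in A, min (g t) (M:ℝ)‖ := le_abs_self _
    _ ≤ (M:ℝ) * (volume A).toReal :=
        norm_setIntegral_le_of_norm_le_const hAfin hb
  have htr : (volume A).toReal ≤ 1/(16*(M+1)) :=
    ENNReal.toReal_le_of_le_ofReal (by positivity) hAvol
  have hsub2 : ∫ t in Set.Ioc (0:ℝ) T, (g t - min (g t) M) =
      (∫ t in Set.Ioc (0:ℝ) T, g t) - ∫ t in Set.Ioc (0:ℝ) T, min (g t) M :=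
    integral_sub hg (hint M)
  have hsub3 : ∫ t in A, (g t - min (g t) M) =
      (∫ t in A, g t) - ∫ t in A, min (g t) M := integral_sub hginA hminA
  have hM1 : (M:ℝ) * (1/(16*(M+1))) ≤ 1/16 := by
    rw [mul_one_div, div_le_div_iff₀ (by positivity) (by norm_num)]
    nlinarith [Nat.cast_nonneg (α := ℝ) M]
  nlinarith [mul_le_mul_of_nonneg_left htr (Nat.cast_nonneg (α := ℝ) M)]

lemma integrable_mul_bounded {f w : ℝ → ℝ} {s : Set ℝ} (hf : IntegrableOn f s)
    (hfm : Measurable f) (hwm : Measurable w) (hb : ∀ t, |w t| ≤ 1) :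
    IntegrableOn (fun t => w t * f t) s := by
  refine Integrable.mono' hf.abs ((hwm.mul hfm).aestronglyMeasurable)
    (Filter.Eventually.of_forall fun t => ?_)
  rw [Real.norm_eq_abs, abs_mul]
  calc |w t| * |f t| ≤ 1 * |f t| := mul_le_mul_of_nonneg_right (hb t) (abs_nonneg _)
  _ = |f t| := one_mul _

set_option maxHeartbeats 2000000

/-- under domination, uniformly bounded total variation,
`n(1 − ‖φ_n‖_{L¹}) → b` and `∫₀^∞ t φ_n(t) dt → σ > 0`, there exist `δ > 0` and `n₀`
such that `|1 − φ̂_n(λ)| ≥ δ · min(|λ|, 1)` for all `n ≥ n₀` and all `λ`. -/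
theorem stmt5 (φ : ℕ → ℝ → ℝ) (φbar : ℝ → ℝ) (b σ : ℝ)
    (hφmeas : ∀ n, Measurable (φ n))
    (hφpos : ∀ n t, 0 ≤ t → 0 ≤ φ n t)
    (hφbar_meas : Measurable φbar)
    (hφbar_int : IntegrableOn (fun t => (1 + t) * φbar t) (Set.Ioi 0))
    (hdom : ∀ n t, 0 ≤ t → φ n t ≤ φbar t)
    (hTV : ∃ C : NNReal, ∀ n, eVariationOn (φ n) (Set.Ici 0) ≤ C)
    (hblim : Tendsto (fun n : ℕ => (n : ℝ) * (1 - L1norm (φ n))) atTop (nhds b))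
    (hσ : 0 < σ)
    (hσlim : Tendsto (fun n : ℕ => ∫ t in Set.Ioi (0:ℝ), t * φ n t) atTop (nhds σ)) :
    ∃ δ : ℝ, 0 < δ ∧ ∃ n₀ : ℕ, ∀ n ≥ n₀, ∀ l : ℝ,
      δ * min |l| 1 ≤ ‖1 - fourierT (φ n) l‖ := by
  clear hTV
  have hpi := Real.pi_pos
  have hb0 : ∀ t ∈ Set.Ioi (0:ℝ), 0 ≤ φbar t :=
    fun t ht => (hφpos 0 t (le_of_lt ht)).trans (hdom 0 t (le_of_lt ht))
  -- integrability of φbar and t·φbar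
  have int_phibar : IntegrableOn φbar (Set.Ioi 0) := by
    refine Integrable.mono' hφbar_int hφbar_meas.aestronglyMeasurable ?_
    rw [ae_restrict_iff' measurableSet_Ioi]
    refine Filter.Eventually.of_forall fun t ht => ?_
    have h1 : 0 ≤ φbar t := hb0 t ht
    have ht0 : (0:ℝ) < t := ht
    rw [Real.norm_eq_abs, abs_of_nonneg h1]
    nlinarith
  have int_tphibar : IntegrableOn (fun t => t * φbar t) (Set.Ioi 0) := by
    refine Integrable.mono' hφbar_int (measurable_id.mul hφbar_meas).aestronglyMeasurable ?_
    rw [ae_restrict_iff' measurableSet_Ioi]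
    refine Filter.Eventually.of_forall fun t ht => ?_
    have h1 : 0 ≤ φbar t := hb0 t ht
    have ht0 : (0:ℝ) < t := ht
    rw [Real.norm_eq_abs, abs_of_nonneg (by positivity)]
    nlinarith
  have int_phin : ∀ n, IntegrableOn (φ n) (Set.Ioi 0) := by
    intro n
    refine Integrable.mono' int_phibar (hφmeas n).aestronglyMeasurable ?_
    rw [ae_restrict_iff' measurableSet_Ioi]
    refine Filter.Eventually.of_forall fun t ht => ?_
    rw [Real.norm_eq_abs, abs_of_nonneg (hφpos n t (le_of_lt ht))]
    exact hdom n t (le_of_lt ht)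
  have int_tphin : ∀ n, IntegrableOn (fun t => t * φ n t) (Set.Ioi 0) := by
    intro n
    refine Integrable.mono' int_tphibar (measurable_id.mul (hφmeas n)).aestronglyMeasurable ?_
    rw [ae_restrict_iff' measurableSet_Ioi]
    refine Filter.Eventually.of_forall fun t ht => ?_
    have ht0 : (0:ℝ) < t := ht
    rw [Real.norm_eq_abs, abs_of_nonneg (by nlinarith [hφpos n t (le_of_lt ht)])]
    nlinarith [hdom n t (le_of_lt ht)]
  set Itb : ℝ := ∫ t in Set.Ioi (0:ℝ), t * φbar t with hItb
  have hItb0 : 0 ≤ Itb :=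
    setIntegral_nonneg measurableSet_Ioi fun t ht => mul_nonneg (le_of_lt ht) (hb0 t ht)
  -- tail cutoff T
  have ev_tail1 : ∀ᶠ N : ℕ in atTop, (∫ t in Set.Ioi ((N:ℝ)), φbar t) ≤ 1/8 :=
    (tendsto_tail int_phibar).eventually_le_const (by norm_num)
  have ev_tail2 : ∀ᶠ N : ℕ in atTop, (∫ t in Set.Ioi ((N:ℝ)), t * φbar t) ≤ σ/16 :=
    (tendsto_tail int_tphibar).eventually_le_const (by positivity)
  obtain ⟨T, hTa, hTb, hT1⟩ := (ev_tail1.and (ev_tail2.and (eventually_ge_atTop 1))).exists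
  have hT0 : (0:ℝ) < (T:ℝ) := by exact_mod_cast Nat.lt_of_lt_of_le Nat.zero_lt_one hT1
  -- λ₀
  set l0 : ℝ := min (1/(T:ℝ)) (σ/(4*((T:ℝ)*Itb+1))) with hl0def
  have hl0 : 0 < l0 := lt_min (by positivity) (by positivity)
  have hl0le1 : l0 ≤ 1 := by
    refine (min_le_left _ _).trans ?_
    rw [div_le_one hT0]
    exact_mod_cast hT1
  -- absolute continuity constant for φbar on Ioc 0 T
  obtain ⟨η, hη, hAC⟩ := ac_bound (T := ((T:ℕ):ℝ)) hφbar_meas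
    (int_phibar.mono_set Set.Ioc_subset_Ioi_self) (fun t ht => hb0 t ht.1)
  -- lattice width d and ε
  set X : ℝ := (T:ℝ)/Real.pi + 3/l0 with hX
  have hX0 : 0 < X := by positivity
  set d : ℝ := min (Real.pi/2) (η/(X+1)) with hd_def
  have hd : 0 < d := lt_min (by positivity) (by positivity)
  have hdpi : d ≤ Real.pi := (min_le_left _ _).trans (by linarith)
  set ε : ℝ := 1 - Real.cos d with hεdef
  have hε : 0 < ε := by
    have h1 : Real.cos d < Real.cos 0 := Real.cos_lt_cos_of_nonneg_of_le_pi le_rfl hdpi hd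
    rw [Real.cos_zero] at h1
    simp only [hεdef]
    linarith
  have hXd : (T:ℝ)*d/Real.pi + 3*d/l0 ≤ η := by
    have he : (T:ℝ)*d/Real.pi + 3*d/l0 = d * X := by rw [hX]; ring
    rw [he]
    calc d * X ≤ (η/(X+1)) * X := mul_le_mul_of_nonneg_right (min_le_right _ _) hX0.le
    _ ≤ η := by
        rw [div_mul_eq_mul_div, div_le_iff₀ (by positivity)]
        nlinarith
  -- n-limits
  have hL1eq : ∀ n, L1norm (φ n) = ∫ t in Set.Ioi (0:ℝ), φ n t := fun n =>
    setIntegral_congr_fun measurableSet_Ioi fun t ht => abs_of_nonneg (hφpos n t (le_of_lt ht))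
  have h1lim : Tendsto (fun n : ℕ => (1:ℝ) - L1norm (φ n)) atTop (nhds 0) := by
    have h2 : Tendsto (fun n : ℕ => ((n:ℝ) * (1 - L1norm (φ n))) * (n:ℝ)⁻¹) atTop
        (nhds (b * 0)) := hblim.mul tendsto_inv_atTop_nhds_zero_nat
    rw [mul_zero] at h2
    refine h2.congr' ?_
    filter_upwards [eventually_ge_atTop 1] with n hn
    have hn0 : ((n:ℝ)) ≠ 0 := by
      have : (1:ℝ) ≤ (n:ℝ) := by exact_mod_cast hn
      linarith
    field_simp
  have hL1 : Tendsto (fun n : ℕ => L1norm (φ n)) atTop (nhds 1) := by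
    have h3 : Tendsto (fun n : ℕ => (1:ℝ) - (1 - L1norm (φ n))) atTop (nhds (1 - 0)) :=
      tendsto_const_nhds.sub h1lim
    simpa using h3
  have ev1 : ∀ᶠ n : ℕ in atTop, 3*σ/4 ≤ ∫ t in Set.Ioi (0:ℝ), t * φ n t :=
    hσlim.eventually (eventually_ge_nhds (by linarith))
  have ev2 : ∀ᶠ n : ℕ in atTop, 7/8 ≤ L1norm (φ n) :=
    hL1.eventually (eventually_ge_nhds (by norm_num))
  have ev3 : ∀ᶠ n : ℕ in atTop, L1norm (φ n) ≤ 1 + ε/8 :=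
    hL1.eventually (eventually_le_nhds (by linarith))
  obtain ⟨n₀, hn₀⟩ := eventually_atTop.1 (ev1.and (ev2.and ev3))
  refine ⟨min (σ/2) (ε/2), lt_min (by positivity) (by positivity), n₀, fun n hn l => ?_⟩
  obtain ⟨hσn, hn2, hn3⟩ := hn₀ n hn
  rw [hL1eq] at hn2 hn3
  set δ : ℝ := min (σ/2) (ε/2) with hδ
  have hδσ : δ ≤ σ/2 := min_le_left _ _
  have hδε : δ ≤ ε/2 := min_le_right _ _
  have hδ0 : 0 < δ := lt_min (by positivity) (by positivity)
  have key : ∀ lam : ℝ, 0 ≤ lam → δ * min lam 1 ≤ ‖1 - fourierT (φ n) lam‖ := by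
    intro lam hlam
    rcases eq_or_lt_of_le hlam with heq | hlam0
    · rw [← heq]
      simp only [min_eq_left (by norm_num : (0:ℝ) ≤ 1), mul_zero]
      exact norm_nonneg _
    rcases le_or_gt lam l0 with hsm | hbig
    · -- small frequency case
      have hl1 : lam ≤ 1/(T:ℝ) := hsm.trans (min_le_left _ _)
      have hl2 : lam ≤ σ/(4*((T:ℝ)*Itb+1)) := hsm.trans (min_le_right _ _)
      have hlamT : lam * (T:ℝ) ≤ 1 := (le_div_iff₀ hT0).1 hl1
      have msin : Measurable fun t : ℝ => Real.sin (lam*t) :=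
        Real.measurable_sin.comp (measurable_id.const_mul lam)
      have isin : IntegrableOn (fun t => Real.sin (lam*t) * φ n t) (Set.Ioi 0) :=
        integrable_mul_bounded (int_phin n) (hφmeas n) msin (fun t => Real.abs_sin_le_one _)
      have ilt : IntegrableOn (fun t => lam * (t * φ n t)) (Set.Ioi 0) := (int_tphin n).const_mul lam
      have heqfun : (fun t => (Real.sin (lam*t) - lam*t) * φ n t)
          = fun t => Real.sin (lam*t) * φ n t - lam * (t * φ n t) := by
        funext t; ring
      have iprod : IntegrableOn (fun t => (Real.sin (lam*t) - lam*t) * φ n t) (Set.Ioi 0) := by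
        rw [heqfun]; exact isin.sub ilt
      have iabs : IntegrableOn (fun t => |(Real.sin (lam*t) - lam*t) * φ n t|) (Set.Ioi 0) :=
        iprod.abs
      have hu := setIntegral_union (μ := volume)
        (f := fun t => |(Real.sin (lam*t) - lam*t) * φ n t|)
        (Set.Ioc_disjoint_Ioi (le_refl ((T:ℕ):ℝ))) measurableSet_Ioi
        (iabs.mono_set Set.Ioc_subset_Ioi_self) (iabs.mono_set (Set.Ioi_subset_Ioi hT0.le))
      rw [Set.Ioc_union_Ioi_eq_Ioi hT0.le] at hu
      have hbd1 : ∫ t in Set.Ioc (0:ℝ) ((T:ℕ):ℝ), |(Real.sin (lam*t) - lam*t) * φ n t| ≤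
          ∫ t in Set.Ioc (0:ℝ) ((T:ℕ):ℝ), (lam^2*(T:ℝ)/2) * (t * φbar t) := by
        refine setIntegral_mono_on (iabs.mono_set Set.Ioc_subset_Ioi_self)
          ((int_tphibar.mono_set Set.Ioc_subset_Ioi_self).const_mul _) measurableSet_Ioc ?_
        intro t ht
        have ht0 : (0:ℝ) < t := ht.1
        have htT : t ≤ (T:ℝ) := ht.2
        have hx0 : 0 ≤ lam*t := by positivity
        have hx1 : lam*t ≤ 1 := by nlinarith
        have hs := sin_err_small hx0 hx1
        have hφb : φ n t ≤ φbar t := hdom n t ht0.le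
        have hφ0 : 0 ≤ φ n t := hφpos n t ht0.le
        have hbb : 0 ≤ φbar t := le_trans hφ0 hφb
        rw [abs_mul, abs_of_nonneg hφ0]
        have hcoef : (lam*t)^2/2 ≤ (lam^2*(T:ℝ)/2) * t := by
          nlinarith [mul_nonneg (mul_nonneg (sq_nonneg lam) ht0.le) (sub_nonneg.2 htT)]
        calc |Real.sin (lam*t) - lam*t| * φ n t ≤ ((lam*t)^2/2) * φbar t :=
              mul_le_mul hs hφb hφ0 (by positivity)
        _ ≤ ((lam^2*(T:ℝ)/2) * t) * φbar t := mul_le_mul_of_nonneg_right hcoef hbb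
        _ = (lam^2*(T:ℝ)/2) * (t * φbar t) := by ring
      have hbd1' : ∫ t in Set.Ioc (0:ℝ) ((T:ℕ):ℝ), (lam^2*(T:ℝ)/2) * (t * φbar t) ≤
          (lam^2*(T:ℝ)/2) * Itb := by
        rw [integral_const_mul]
        refine mul_le_mul_of_nonneg_left ?_ (by positivity)
        refine setIntegral_mono_set int_tphibar ?_
          (HasSubset.Subset.eventuallyLE Set.Ioc_subset_Ioi_self)
        filter_upwards [ae_restrict_mem measurableSet_Ioi] with t ht
        exact mul_nonneg (le_of_lt ht) (hb0 t ht)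
      have hbd2 : ∫ t in Set.Ioi ((T:ℕ):ℝ), |(Real.sin (lam*t) - lam*t) * φ n t| ≤
          ∫ t in Set.Ioi ((T:ℕ):ℝ), (2*lam) * (t * φbar t) := by
        refine setIntegral_mono_on (iabs.mono_set (Set.Ioi_subset_Ioi hT0.le))
          ((int_tphibar.mono_set (Set.Ioi_subset_Ioi hT0.le)).const_mul _) measurableSet_Ioi ?_
        intro t ht
        have ht0 : (0:ℝ) < t := lt_trans hT0 ht
        have hs := sin_err_big (lam*t)
        rw [abs_of_nonneg (by positivity : (0:ℝ) ≤ lam*t)] at hs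
        have hφb : φ n t ≤ φbar t := hdom n t ht0.le
        have hφ0 : 0 ≤ φ n t := hφpos n t ht0.le
        rw [abs_mul, abs_of_nonneg hφ0]
        nlinarith [abs_nonneg (Real.sin (lam*t) - lam*t)]
      have hbd2' : ∫ t in Set.Ioi ((T:ℕ):ℝ), (2*lam) * (t * φbar t) ≤ lam*σ/8 := by
        rw [integral_const_mul]
        calc (2*lam) * ∫ t in Set.Ioi ((T:ℕ):ℝ), t * φbar t ≤ (2*lam)*(σ/16) :=
              mul_le_mul_of_nonneg_left hTb (by positivity)
        _ = lam*σ/8 := by ring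
      have hE : ∫ t in Set.Ioi (0:ℝ), |(Real.sin (lam*t) - lam*t) * φ n t| ≤ lam*σ/4 := by
        rw [hu]
        have h4 : lam * (4*((T:ℝ)*Itb+1)) ≤ σ := (le_div_iff₀ (by positivity)).1 hl2
        have c1 : (lam^2*(T:ℝ)/2) * Itb ≤ lam*σ/8 := by
          nlinarith [hlam0.le, mul_nonneg hlam0.le hItb0, mul_nonneg (mul_nonneg hlam0.le hlam0.le) (mul_nonneg hT0.le hItb0)]
        linarith [hbd1.trans hbd1', hbd2.trans hbd2']
      have him := fourierT_im (hφmeas n) (int_phin n) lam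
      have hP : ∫ t in Set.Ioi (0:ℝ), (Real.sin (lam*t) - lam*t) * φ n t =
          (∫ t in Set.Ioi (0:ℝ), Real.sin (lam*t) * φ n t)
            - ∫ t in Set.Ioi (0:ℝ), lam * (t * φ n t) := by
        rw [heqfun]; exact integral_sub isin ilt
      have eL : ∫ t in Set.Ioi (0:ℝ), lam * (t * φ n t)
          = lam * ∫ t in Set.Ioi (0:ℝ), t * φ n t := integral_const_mul _ _
      have hPabs : |∫ t in Set.Ioi (0:ℝ), (Real.sin (lam*t) - lam*t) * φ n t| ≤
          ∫ t in Set.Ioi (0:ℝ), |(Real.sin (lam*t) - lam*t) * φ n t| := by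
        have := norm_integral_le_integral_norm (μ := volume.restrict (Set.Ioi 0))
          (f := fun t => (Real.sin (lam*t) - lam*t) * φ n t)
        simpa [Real.norm_eq_abs, abs_mul] using this
      have hlami : lam * (3*σ/4) ≤ lam * ∫ t in Set.Ioi (0:ℝ), t * φ n t := by
        refine mul_le_mul_of_nonneg_left ?_ hlam0.le
        linarith [hσn]
      have hival : lam*σ/2 ≤ (fourierT (φ n) lam).im := by
        rw [him]
        have hp1 : -(lam*σ/4) ≤ ∫ t in Set.Ioi (0:ℝ), (Real.sin (lam*t) - lam*t) * φ n t := by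
          have := neg_abs_le (∫ t in Set.Ioi (0:ℝ), (Real.sin (lam*t) - lam*t) * φ n t)
          linarith [hPabs, hE]
        have := hP
        nlinarith [hlami, eL]
      have hnormge : (fourierT (φ n) lam).im ≤ ‖1 - fourierT (φ n) lam‖ := by
        have h2 : (1 - fourierT (φ n) lam).im = -(fourierT (φ n) lam).im := by
          simp [Complex.sub_im]
        calc (fourierT (φ n) lam).im ≤ |(fourierT (φ n) lam).im| := le_abs_self _
        _ = |(1 - fourierT (φ n) lam).im| := by rw [h2, abs_neg]
        _ ≤ ‖1 - fourierT (φ n) lam‖ := Complex.abs_im_le_norm _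
      rw [min_eq_left (hsm.trans hl0le1)]
      calc δ * lam ≤ (σ/2) * lam := mul_le_mul_of_nonneg_right hδσ hlam0.le
      _ ≤ (fourierT (φ n) lam).im := by linarith [hival]
      _ ≤ ‖1 - fourierT (φ n) lam‖ := hnormge
    · -- large frequency case
      have hlge : l0 ≤ lam := hbig.le
      set B : Set ℝ := {t : ℝ | t ∈ Set.Ioc (0:ℝ) ((T:ℕ):ℝ) ∧ Real.cos d < Real.cos (lam*t)}
        with hBdef
      have hBsubIoc : B ⊆ Set.Ioc (0:ℝ) ((T:ℕ):ℝ) := fun t ht => ht.1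
      have hBsub : B ⊆ Set.Ioi (0:ℝ) := fun t ht => ht.1.1
      have hBmeas : MeasurableSet B := by
        have he : B = Set.Ioc (0:ℝ) ((T:ℕ):ℝ) ∩ {t : ℝ | Real.cos d < Real.cos (lam*t)} := rfl
        rw [he]
        exact measurableSet_Ioc.inter (measurableSet_lt measurable_const
          (Real.measurable_cos.comp (measurable_id.const_mul lam)))
      have hBvol : volume B ≤ ENNReal.ofReal η :=
        (bad_measure hl0 hlge hT0 hd hdpi).trans (ENNReal.ofReal_le_ofReal hXd)
      have hBφbar : ∫ t in B, φbar t ≤ 1/8 := hAC B hBmeas hBsubIoc hBvol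
      have hBφn : ∫ t in B, φ n t ≤ 1/8 := by
        refine le_trans ?_ hBφbar
        exact setIntegral_mono_on ((int_phin n).mono_set hBsub) (int_phibar.mono_set hBsub)
          hBmeas (fun t ht => hdom n t (le_of_lt ht.1.1))
      set G : Set ℝ := Set.Ioc (0:ℝ) ((T:ℕ):ℝ) \ B with hGdef
      have hGmeas : MeasurableSet G := measurableSet_Ioc.diff hBmeas
      have hGsub : G ⊆ Set.Ioi (0:ℝ) := fun t ht => ht.1.1
      have hsplit1 : ∫ t in Set.Ioc (0:ℝ) ((T:ℕ):ℝ), φ n t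
          = (∫ t in B, φ n t) + ∫ t in G, φ n t := by
        rw [← setIntegral_union disjoint_sdiff_self_right hGmeas
          ((int_phin n).mono_set hBsub) ((int_phin n).mono_set hGsub),
          Set.union_diff_cancel hBsubIoc]
      have hsplit2 : ∫ t in Set.Ioi (0:ℝ), φ n t
          = (∫ t in Set.Ioc (0:ℝ) ((T:ℕ):ℝ), φ n t) + ∫ t in Set.Ioi ((T:ℕ):ℝ), φ n t := by
        rw [← setIntegral_union (Set.Ioc_disjoint_Ioi le_rfl) measurableSet_Ioi
          ((int_phin n).mono_set Set.Ioc_subset_Ioi_self)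
          ((int_phin n).mono_set (Set.Ioi_subset_Ioi hT0.le)),
          Set.Ioc_union_Ioi_eq_Ioi hT0.le]
      have htailn : ∫ t in Set.Ioi ((T:ℕ):ℝ), φ n t ≤ 1/8 :=
        le_trans (setIntegral_mono_on ((int_phin n).mono_set (Set.Ioi_subset_Ioi hT0.le))
          (int_phibar.mono_set (Set.Ioi_subset_Ioi hT0.le)) measurableSet_Ioi
          (fun t ht => hdom n t (le_of_lt (lt_trans hT0 ht)))) hTa
      have hGge : 5/8 ≤ ∫ t in G, φ n t := by linarith [hn2, hsplit1, hsplit2, hBφn, htailn]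
      have mcos : Measurable fun t : ℝ => Real.cos (lam*t) :=
        Real.measurable_cos.comp (measurable_id.const_mul lam)
      have icos : IntegrableOn (fun t => Real.cos (lam*t) * φ n t) (Set.Ioi 0) :=
        integrable_mul_bounded (int_phin n) (hφmeas n) mcos (fun t => Real.abs_cos_le_one _)
      have heqfun : (fun t => (1 - Real.cos (lam*t)) * φ n t)
          = fun t => φ n t - Real.cos (lam*t) * φ n t := by
        funext t; ring
      have i1cos : IntegrableOn (fun t => (1 - Real.cos (lam*t)) * φ n t) (Set.Ioi 0) := by
        rw [heqfun]; exact (int_phin n).sub icos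
      have hsub : ∫ t in Set.Ioi (0:ℝ), (1 - Real.cos (lam*t)) * φ n t =
          (∫ t in Set.Ioi (0:ℝ), φ n t) - ∫ t in Set.Ioi (0:ℝ), Real.cos (lam*t) * φ n t := by
        rw [heqfun]; exact integral_sub (int_phin n) icos
      have hmono1 : ∫ t in G, (1 - Real.cos (lam*t)) * φ n t ≤
          ∫ t in Set.Ioi (0:ℝ), (1 - Real.cos (lam*t)) * φ n t := by
        refine setIntegral_mono_set i1cos ?_ (HasSubset.Subset.eventuallyLE hGsub)
        filter_upwards [ae_restrict_mem measurableSet_Ioi] with t ht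
        exact mul_nonneg (by nlinarith [Real.cos_le_one (lam*t)]) (hφpos n t (le_of_lt ht))
      have hεbound : ε * ∫ t in G, φ n t ≤ ∫ t in G, (1 - Real.cos (lam*t)) * φ n t := by
        rw [← integral_const_mul]
        refine setIntegral_mono_on (((int_phin n).mono_set hGsub).const_mul ε)
          (i1cos.mono_set hGsub) hGmeas ?_
        intro t ht
        have hnotB : ¬ (Real.cos d < Real.cos (lam*t)) := fun hc => ht.2 ⟨ht.1, hc⟩
        push_neg at hnotB
        have hφ0 : 0 ≤ φ n t := hφpos n t (le_of_lt ht.1.1)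
        have hεle : ε ≤ 1 - Real.cos (lam*t) := by
          simp only [hεdef]; linarith
        exact mul_le_mul_of_nonneg_right hεle hφ0
      have hre := fourierT_re (hφmeas n) (int_phin n) lam
      have hrege : ε/2 ≤ 1 - (fourierT (φ n) lam).re := by
        rw [hre]
        have h5 : ε * (5/8) ≤ ε * ∫ t in G, φ n t := mul_le_mul_of_nonneg_left hGge hε.le
        have e1 : ε * (5/8) ≤ (∫ t in Set.Ioi (0:ℝ), φ n t)
            - ∫ t in Set.Ioi (0:ℝ), Real.cos (lam*t) * φ n t := by
          rw [← hsub]; exact le_trans (le_trans h5 hεbound) hmono1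
        linarith [hn3, e1]
      have hnormge : 1 - (fourierT (φ n) lam).re ≤ ‖1 - fourierT (φ n) lam‖ := by
        calc 1 - (fourierT (φ n) lam).re = (1 - fourierT (φ n) lam).re := by
              simp [Complex.sub_re]
        _ ≤ |(1 - fourierT (φ n) lam).re| := le_abs_self _
        _ ≤ ‖1 - fourierT (φ n) lam‖ := Complex.abs_re_le_norm _
      calc δ * min lam 1 ≤ (ε/2) * 1 :=
            mul_le_mul hδε (min_le_right _ _) (le_min hlam0.le zero_le_one) (by positivity)
      _ = ε/2 := mul_one _
      _ ≤ 1 - (fourierT (φ n) lam).re := hrege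
      _ ≤ ‖1 - fourierT (φ n) lam‖ := hnormge
  rcases le_or_gt 0 l with hl | hl
  · rw [abs_of_nonneg hl]; exact key l hl
  · rw [abs_of_neg hl]
    have hk := key (-l) (by linarith)
    rwa [norm_one_sub_fourierT_neg (φ n) l] at hk
end

section
/- Let φ : [0,∞) → [0,∞) be integrable and let R be a resolvent of φ. Then for every t ≥ 0: (1 − ‖φ‖_{L¹}) · ∫_t^∞ R(s) ds = ∫_t^∞ φ(s) ds + ∫₀^t R(t−s) ( ∫_s^∞ φ(r) dr ) ds. -/
open MeasureTheory Set Filter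
open scoped ENNReal

/-- Convolution on `[0,∞)`: `(f∗g)(t) = ∫₀^t f(t−s) g(s) ds`. -/
noncomputable def conv (f g : ℝ → ℝ) (t : ℝ) : ℝ :=
  ∫ s in (0:ℝ)..t, f (t - s) * g s

/-- translation for set lintegrals on half-lines -/
lemma stmt13_trans (Φ : ℝ → ℝ≥0∞) (a s : ℝ) :
    ∫⁻ u in Set.Ioi a, Φ (u - s) = ∫⁻ r in Set.Ioi (a - s), Φ r := by
  rw [← lintegral_indicator measurableSet_Ioi, ← lintegral_indicator measurableSet_Ioi]
  rw [show (fun u => (Set.Ioi a).indicator (fun u => Φ (u - s)) u)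
      = fun u => ((Set.Ioi (a - s)).indicator Φ) (u - s) by
    funext u
    by_cases hu : u ∈ Set.Ioi a
    · rw [Set.indicator_of_mem hu, Set.indicator_of_mem (by simpa using sub_lt_sub_right hu s)]
    · rw [Set.indicator_of_notMem hu, Set.indicator_of_notMem (by
        simp only [Set.mem_Ioi] at hu ⊢; intro h; exact hu (by linarith))]]
  exact lintegral_sub_right_eq_self (fun u => (Set.Ioi (a - s)).indicator Φ u) s

/-- if `R` is a resolvent of the integrable `φ ≥ 0`, then for all `t ≥ 0`,
`(1 − ‖φ‖_{L¹}) ∫_t^∞ R(s) ds = ∫_t^∞ φ(s) ds + ∫₀^t R(t−s) (∫_s^∞ φ(r) dr) ds`. -/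
theorem stmt13 (φ R : ℝ → ℝ)
    (hφmeas : Measurable φ) (hRmeas : Measurable R)
    (hφpos : ∀ t, 0 ≤ t → 0 ≤ φ t)
    (hφint : IntegrableOn φ (Set.Ioi 0))
    (hRpos : ∀ t, 0 ≤ t → 0 ≤ R t)
    (hRint : IntegrableOn R (Set.Ioi 0))
    (hres : ∀ᵐ t ∂(volume.restrict (Set.Ioi 0)), R t = φ t + conv R φ t) :
    ∀ t : ℝ, 0 ≤ t →
      (1 - L1norm φ) * (∫ s in Set.Ioi t, R s)
        = (∫ s in Set.Ioi t, φ s)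
          + ∫ s in (0:ℝ)..t, R (t - s) * (∫ r in Set.Ioi s, φ r) := by
  intro t ht
  have hsub : Set.Ioi t ⊆ Set.Ioi 0 := Set.Ioi_subset_Ioi ht
  -- ENNReal versions
  set Φ : ℝ → ℝ≥0∞ := fun x => ENNReal.ofReal (φ x) with hΦdef
  set Rn : ℝ → ℝ≥0∞ := fun x => ENNReal.ofReal (R x) with hRndef
  have hΦm : Measurable Φ := hφmeas.ennreal_ofReal
  have hRnm : Measurable Rn := hRmeas.ennreal_ofReal
  -- finiteness
  have hΦfin : ∫⁻ x in Set.Ioi 0, Φ x ≠ ∞ := by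
    have h1 : ∫⁻ x in Set.Ioi 0, Φ x ≤ ∫⁻ x in Set.Ioi 0, (‖φ x‖₊ : ℝ≥0∞) :=
      lintegral_mono fun x => Real.ofReal_le_enorm _
    exact (h1.trans_lt hφint.2).ne
  have hRnfin : ∫⁻ x in Set.Ioi 0, Rn x ≠ ∞ := by
    have h1 : ∫⁻ x in Set.Ioi 0, Rn x ≤ ∫⁻ x in Set.Ioi 0, (‖R x‖₊ : ℝ≥0∞) :=
      lintegral_mono fun x => Real.ofReal_le_enorm _
    exact (h1.trans_lt hRint.2).ne
  -- tail integrals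
  set T : ℝ → ℝ≥0∞ := fun a => ∫⁻ r in Set.Ioi a, Φ r with hTdef
  set τ : ℝ → ℝ := fun a => ∫ r in Set.Ioi (max a 0), φ r with hτdef
  have hτnonneg : ∀ a, 0 ≤ τ a := fun a =>
    setIntegral_nonneg measurableSet_Ioi fun x hx =>
      hφpos x (le_of_lt (lt_of_le_of_lt (le_max_right a 0) hx))
  have hφabs_int : IntegrableOn (fun x => |φ x|) (Set.Ioi 0) := hφint.abs
  have hτle : ∀ a, τ a ≤ L1norm φ := by
    intro a
    have hss : Set.Ioi (max a 0) ⊆ Set.Ioi 0 := Set.Ioi_subset_Ioi (le_max_right a 0)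
    have h1 : τ a ≤ ∫ r in Set.Ioi (max a 0), |φ r| := by
      apply setIntegral_mono_on (hφint.mono_set hss) (hφabs_int.mono_set hss)
        measurableSet_Ioi
      intro x _; exact le_abs_self _
    have h2 : ∫ r in Set.Ioi (max a 0), |φ r| ≤ ∫ r in Set.Ioi 0, |φ r| :=
      setIntegral_mono_set hφabs_int
        (Filter.Eventually.of_forall fun x => abs_nonneg _)
        (HasSubset.Subset.eventuallyLE hss)
    exact h1.trans h2
  have hτmeas : Measurable τ := by
    apply Antitone.measurable
    intro a b hab
    have hss : Set.Ioi (max b 0) ⊆ Set.Ioi (max a 0) :=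
      Set.Ioi_subset_Ioi (max_le_max hab le_rfl)
    have hss0 : Set.Ioi (max a 0) ⊆ Set.Ioi 0 := Set.Ioi_subset_Ioi (le_max_right a 0)
    exact setIntegral_mono_set (hφint.mono_set hss0)
      ((ae_restrict_iff' measurableSet_Ioi).2 (Filter.Eventually.of_forall
        fun x hx => hφpos x (le_of_lt (lt_of_le_of_lt (le_max_right a 0) hx))))
      (HasSubset.Subset.eventuallyLE hss)
  -- T in terms of τ
  have hTτ : ∀ a : ℝ, 0 ≤ a → T a = ENNReal.ofReal (τ a) := by
    intro a ha
    have hmax : max a 0 = a := max_eq_left ha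
    have hint : IntegrableOn φ (Set.Ioi a) := hφint.mono_set (Set.Ioi_subset_Ioi ha)
    have hnn : 0 ≤ᵐ[volume.restrict (Set.Ioi a)] φ :=
      (ae_restrict_iff' measurableSet_Ioi).2 (Filter.Eventually.of_forall
        fun x hx => hφpos x (le_of_lt (lt_of_le_of_lt ha hx)))
    simp only [hTdef, hτdef, hmax]
    exact (ofReal_integral_eq_lintegral_ofReal hint hnn).symm
  have hT0 : T 0 = ENNReal.ofReal (L1norm φ) := by
    rw [hTτ 0 le_rfl]
    congr 1
    rw [hτdef]; simp only [max_self]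
    rw [show L1norm φ = ∫ x in Set.Ioi (0:ℝ), |φ x| from rfl]
    apply setIntegral_congr_fun measurableSet_Ioi
    intro x hx; exact (abs_of_nonneg (hφpos x (le_of_lt hx))).symm
  -- A
  have hA : ∫⁻ x in Set.Ioi t, Rn x = ENNReal.ofReal (∫ x in Set.Ioi t, R x) := by
    have hnn : 0 ≤ᵐ[volume.restrict (Set.Ioi t)] R :=
      (ae_restrict_iff' measurableSet_Ioi).2 (Filter.Eventually.of_forall
        fun x hx => hRpos x (le_of_lt (lt_of_le_of_lt ht hx)))
    rw [← ofReal_integral_eq_lintegral_ofReal (hRint.mono_set hsub) hnn]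
  -- the kernel and Tonelli
  set k : ℝ → ℝ → ℝ≥0∞ := fun u s =>
    (Set.Ioi t).indicator (fun u => (Set.Ioo 0 u).indicator
      (fun s => Rn s * Φ (u - s)) s) u with hkdef
  have hSmeas : MeasurableSet {p : ℝ × ℝ | t < p.1 ∧ 0 < p.2 ∧ p.2 < p.1} := by
    apply MeasurableSet.inter
    · exact measurableSet_lt measurable_const measurable_fst
    · exact (measurableSet_lt measurable_const measurable_snd).inter
        (measurableSet_lt measurable_snd measurable_fst)
  have hFmeas : Measurable fun p : ℝ × ℝ => Rn p.2 * Φ (p.1 - p.2) :=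
    (hRnm.comp measurable_snd).mul (hΦm.comp (measurable_fst.sub measurable_snd))
  have hkuncurry : Function.uncurry k =
      Set.indicator {p : ℝ × ℝ | t < p.1 ∧ 0 < p.2 ∧ p.2 < p.1}
        (fun p => Rn p.2 * Φ (p.1 - p.2)) := by
    funext p
    rcases p with ⟨u, s⟩
    simp only [Function.uncurry, hkdef, Set.indicator_apply, Set.mem_Ioi, Set.mem_Ioo,
      Set.mem_setOf_eq]
    by_cases h1 : t < u <;> by_cases h2 : 0 < s ∧ s < u <;> simp [h1, h2]
  have hkm : Measurable (Function.uncurry k) := by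
    rw [hkuncurry]; exact hFmeas.indicator hSmeas
  have hswap : ∫⁻ u, ∫⁻ s, k u s ∂(volume : Measure ℝ) ∂(volume : Measure ℝ)
      = ∫⁻ s, ∫⁻ u, k u s ∂(volume : Measure ℝ) ∂(volume : Measure ℝ) :=
    lintegral_lintegral_swap
      (hkm.aemeasurable :
        AEMeasurable (Function.uncurry k) ((volume : Measure ℝ).prod (volume : Measure ℝ)))
  -- inner integral I
  set I : ℝ → ℝ≥0∞ := fun u => ∫⁻ s in Set.Ioo 0 u, Rn s * Φ (u - s) with hIdef
  have hImeas : Measurable I := by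
    have : Function.uncurry (fun u s => (Set.Ioo 0 u).indicator
        (fun s => Rn s * Φ (u - s)) s) =
        Set.indicator {p : ℝ × ℝ | 0 < p.2 ∧ p.2 < p.1}
          (fun p => Rn p.2 * Φ (p.1 - p.2)) := by
      funext p
      rcases p with ⟨u, s⟩
      simp only [Function.uncurry, Set.indicator_apply, Set.mem_Ioo, Set.mem_setOf_eq]
    have hm2 : Measurable (Function.uncurry (fun u s => (Set.Ioo 0 u).indicator
        (fun s => Rn s * Φ (u - s)) s)) := by
      rw [this]
      exact hFmeas.indicator ((measurableSet_lt measurable_const measurable_snd).inter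
        (measurableSet_lt measurable_snd measurable_fst))
    have := hm2.lintegral_prod_right' (ν := (volume : Measure ℝ))
    convert this using 1
    funext u
    rw [show I u = ∫⁻ s in Set.Ioo 0 u, Rn s * Φ (u - s) from rfl,
      ← lintegral_indicator measurableSet_Ioo]
    rfl
  -- LHS of swap
  have hLHS : ∫⁻ u, ∫⁻ s, k u s = ∫⁻ u in Set.Ioi t, I u := by
    rw [← lintegral_indicator measurableSet_Ioi]
    apply lintegral_congr
    intro u
    by_cases hu : u ∈ Set.Ioi t
    · rw [Set.indicator_of_mem hu]
      rw [show (fun s => k u s) = fun s => (Set.Ioo 0 u).indicator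
          (fun s => Rn s * Φ (u - s)) s by
        funext s; rw [hkdef]; simp only [Set.indicator_of_mem hu]]
      rw [lintegral_indicator measurableSet_Ioo]
    · rw [Set.indicator_of_notMem hu]
      rw [show (fun s => k u s) = fun _ => 0 by
        funext s; rw [hkdef]; simp only [Set.indicator_of_notMem hu]]
      simp
  -- RHS of swap
  have hRHS : ∫⁻ s, ∫⁻ u, k u s =
      (∫⁻ s in Set.Ioc 0 t, Rn s * T (t - s)) + T 0 * ∫⁻ s in Set.Ioi t, Rn s := by
    have hsec : ∀ s : ℝ, ∫⁻ u, k u s =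
        (Set.Ioi (0:ℝ)).indicator (fun s => Rn s * T (max t s - s)) s := by
      intro s
      by_cases hs : 0 < s
      · rw [Set.indicator_of_mem (show s ∈ Set.Ioi (0:ℝ) from hs)]
        have hk : (fun u => k u s) = (Set.Ioi (max t s)).indicator
            (fun u => Rn s * Φ (u - s)) := by
          funext u
          rw [hkdef]
          simp only [Set.indicator_apply, Set.mem_Ioi, Set.mem_Ioo, max_lt_iff]
          by_cases h1 : t < u <;> by_cases h2 : s < u <;> simp [h1, h2, hs]
        rw [hk, lintegral_indicator measurableSet_Ioi,
          lintegral_const_mul (Rn s)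
            (show Measurable fun u : ℝ => Φ (u - s) from hΦm.comp (measurable_sub_const s)),
          stmt13_trans, hTdef]
      · rw [Set.indicator_of_notMem (show s ∉ Set.Ioi (0:ℝ) by simpa using hs)]
        rw [show (fun u => k u s) = fun _ => 0 by
          funext u
          rw [hkdef]
          simp only [Set.indicator_apply, Set.mem_Ioi, Set.mem_Ioo]
          by_cases h1 : t < u <;> simp [h1, hs]]
        simp
    calc ∫⁻ s, ∫⁻ u, k u s
        = ∫⁻ s in Set.Ioi 0, Rn s * T (max t s - s) := by
          rw [lintegral_congr hsec, lintegral_indicator measurableSet_Ioi]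
      _ = (∫⁻ s in Set.Ioc 0 t, Rn s * T (max t s - s))
          + ∫⁻ s in Set.Ioi t, Rn s * T (max t s - s) := by
          rw [← lintegral_union measurableSet_Ioi Set.Ioc_disjoint_Ioi_same,
            Set.Ioc_union_Ioi_eq_Ioi ht]
      _ = (∫⁻ s in Set.Ioc 0 t, Rn s * T (t - s)) + T 0 * ∫⁻ s in Set.Ioi t, Rn s := by
          congr 1
          · apply setLIntegral_congr_fun measurableSet_Ioc
            exact fun s hs => by beta_reduce; rw [max_eq_left hs.2]
          · calc ∫⁻ s in Set.Ioi t, Rn s * T (max t s - s)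
                = ∫⁻ s in Set.Ioi t, Rn s * T 0 := by
                  apply setLIntegral_congr_fun measurableSet_Ioi
                  exact fun s hs => by
                    beta_reduce; rw [max_eq_right (le_of_lt hs), sub_self]
              _ = T 0 * ∫⁻ s in Set.Ioi t, Rn s := by
                  rw [lintegral_mul_const _ hRnm, mul_comm]
  -- C' : the boundary term, real version
  set C : ℝ := ∫ s in Set.Ioc 0 t, R s * τ (t - s) with hCdef
  have hCint : IntegrableOn (fun s => R s * τ (t - s)) (Set.Ioc 0 t) := by
    have hbound : IntegrableOn (fun s => R s * L1norm φ) (Set.Ioc 0 t) :=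
      (hRint.mono_set Set.Ioc_subset_Ioi_self).mul_const _
    apply Integrable.mono hbound
    · exact ((hRmeas.mul (hτmeas.comp (measurable_const.sub
        measurable_id))).aestronglyMeasurable)
    · apply (ae_restrict_iff' measurableSet_Ioc).2
      apply Filter.Eventually.of_forall
      intro s hs
      have hR0 : 0 ≤ R s := hRpos s (le_of_lt hs.1)
      have hL0 : 0 ≤ L1norm φ := setIntegral_nonneg measurableSet_Ioi fun x _ => abs_nonneg _
      rw [Real.norm_eq_abs, Real.norm_eq_abs, abs_of_nonneg (mul_nonneg hR0 (hτnonneg _)),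
        abs_of_nonneg (mul_nonneg hR0 hL0)]
      exact mul_le_mul_of_nonneg_left (hτle _) hR0
  have hCnonneg : 0 ≤ C :=
    setIntegral_nonneg measurableSet_Ioc fun s hs =>
      mul_nonneg (hRpos s (le_of_lt hs.1)) (hτnonneg _)
  have hClint : ∫⁻ s in Set.Ioc 0 t, Rn s * T (t - s) = ENNReal.ofReal C := by
    have hnn : 0 ≤ᵐ[volume.restrict (Set.Ioc 0 t)] fun s => R s * τ (t - s) :=
      (ae_restrict_iff' measurableSet_Ioc).2 (Filter.Eventually.of_forall
        fun s hs => mul_nonneg (hRpos s (le_of_lt hs.1)) (hτnonneg _))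
    rw [hCdef, ofReal_integral_eq_lintegral_ofReal hCint hnn]
    apply setLIntegral_congr_fun measurableSet_Ioc
    intro s hs
    beta_reduce
    rw [hTτ (t - s) (by linarith [hs.2]), ← ENNReal.ofReal_mul (hRpos s (le_of_lt hs.1))]
  -- the key identity in ℝ≥0∞
  have hkey : ∫⁻ u in Set.Ioi t, I u =
      ENNReal.ofReal C + ENNReal.ofReal (L1norm φ) *
        ENNReal.ofReal (∫ x in Set.Ioi t, R x) := by
    rw [← hLHS, hswap, hRHS, hClint, hT0, hA]
  -- finiteness of the I-integral
  have hIfin : ∫⁻ u in Set.Ioi t, I u ≠ ∞ := by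
    rw [hkey]
    exact ENNReal.add_ne_top.2 ⟨ENNReal.ofReal_ne_top,
      ENNReal.mul_ne_top ENNReal.ofReal_ne_top ENNReal.ofReal_ne_top⟩
  -- a.e. identification of conv with I on Ioi t
  have hae : ∀ᵐ u ∂(volume.restrict (Set.Ioi t)),
      ENNReal.ofReal (conv R φ u) = I u ∧ 0 ≤ conv R φ u := by
    filter_upwards [ae_lt_top hImeas hIfin, ae_restrict_mem measurableSet_Ioi]
      with u hIu hu
    have hu0 : 0 < u := lt_of_le_of_lt ht hu
    set g : ℝ → ℝ := fun s => R s * φ (u - s) with hgdef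
    have hgnn : ∀ s ∈ Set.Ioo (0:ℝ) u, 0 ≤ g s := fun s hs =>
      mul_nonneg (hRpos s (le_of_lt hs.1)) (hφpos _ (by linarith [hs.2]))
    have hIeq : I u = ∫⁻ s in Set.Ioo 0 u, ENNReal.ofReal (g s) := by
      apply setLIntegral_congr_fun measurableSet_Ioo
      intro s hs
      beta_reduce
      rw [hgdef, ENNReal.ofReal_mul (hRpos s (le_of_lt hs.1))]
    have hgmeas : Measurable g :=
      hRmeas.mul (hφmeas.comp (measurable_const.sub measurable_id))
    have hgint : IntegrableOn g (Set.Ioo 0 u) := by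
      constructor
      · exact hgmeas.aestronglyMeasurable
      · rw [HasFiniteIntegral]
        have : ∫⁻ s in Set.Ioo 0 u, ‖g s‖ₑ =
            ∫⁻ s in Set.Ioo 0 u, ENNReal.ofReal (g s) := by
          apply setLIntegral_congr_fun measurableSet_Ioo
          exact fun s hs =>
            Real.enorm_eq_ofReal (hgnn s hs)
        rw [this, ← hIeq]; exact hIu
    have hconveq : conv R φ u = ∫ s in Set.Ioo 0 u, g s := by
      rw [conv]
      have h1 : (∫ s in (0:ℝ)..u, R (u - s) * φ s)
          = ∫ s in (0:ℝ)..u, g (u - s) := by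
        apply intervalIntegral.integral_congr
        intro s _
        rw [hgdef]; simp [sub_sub_cancel]
      rw [h1, intervalIntegral.integral_comp_sub_left g u, sub_self, sub_zero,
        intervalIntegral.integral_of_le (le_of_lt hu0),
        integral_Ioc_eq_integral_Ioo]
    have hconvnn : 0 ≤ conv R φ u := by
      rw [hconveq]
      exact setIntegral_nonneg measurableSet_Ioo hgnn
    refine ⟨?_, hconvnn⟩
    rw [hconveq, hIeq]
    apply ofReal_integral_eq_lintegral_ofReal hgint
    exact (ae_restrict_iff' measurableSet_Ioo).2 (Filter.Eventually.of_forall hgnn)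
  -- conv integrable on Ioi t
  have hres' : ∀ᵐ u ∂(volume.restrict (Set.Ioi t)), R u = φ u + conv R φ u :=
    ae_restrict_of_ae_restrict_of_subset hsub hres
  have hconvint : IntegrableOn (conv R φ) (Set.Ioi t) := by
    apply Integrable.congr ((hRint.mono_set hsub).sub (hφint.mono_set hsub))
    filter_upwards [hres'] with u hu
    simp only [Pi.sub_apply]
    rw [hu]; ring
  -- real-valued key identity
  have hconv_nn : 0 ≤ᵐ[volume.restrict (Set.Ioi t)] conv R φ := by
    filter_upwards [hae] with u hu using hu.2
  have hreal : ∫ u in Set.Ioi t, conv R φ u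
      = C + L1norm φ * ∫ x in Set.Ioi t, R x := by
    have h1 : ENNReal.ofReal (∫ u in Set.Ioi t, conv R φ u)
        = ∫⁻ u in Set.Ioi t, I u := by
      rw [ofReal_integral_eq_lintegral_ofReal hconvint hconv_nn]
      apply lintegral_congr_ae
      filter_upwards [hae] with u hu using hu.1
    rw [hkey] at h1
    have hL0 : 0 ≤ L1norm φ := setIntegral_nonneg measurableSet_Ioi fun x _ => abs_nonneg _
    have hA0 : 0 ≤ ∫ x in Set.Ioi t, R x :=
      setIntegral_nonneg measurableSet_Ioi fun x hx =>
        hRpos x (le_of_lt (lt_of_le_of_lt ht hx))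
    have hconv0 : 0 ≤ ∫ u in Set.Ioi t, conv R φ u :=
      setIntegral_nonneg_ae measurableSet_Ioi ((ae_restrict_iff' measurableSet_Ioi).1 hconv_nn)
    rw [← ENNReal.ofReal_mul hL0, ← ENNReal.ofReal_add hCnonneg (mul_nonneg hL0 hA0)] at h1
    exact (ENNReal.ofReal_eq_ofReal_iff hconv0
      (add_nonneg hCnonneg (mul_nonneg hL0 hA0))).1 h1
  -- split the integral of R
  have hsplit : ∫ u in Set.Ioi t, R u
      = (∫ u in Set.Ioi t, φ u) + ∫ u in Set.Ioi t, conv R φ u := by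
    rw [← integral_add (hφint.mono_set hsub) hconvint]
    exact integral_congr_ae hres'
  -- identify the interval integral with C
  have hC' : (∫ s in (0:ℝ)..t, R (t - s) * (∫ r in Set.Ioi s, φ r)) = C := by
    have h1 : (∫ s in (0:ℝ)..t, R (t - s) * (∫ r in Set.Ioi s, φ r))
        = ∫ s in (0:ℝ)..t, (fun x => R x * τ (t - x)) (t - s) := by
      apply intervalIntegral.integral_congr
      intro s hs
      rw [Set.uIcc_of_le ht] at hs
      simp only [sub_sub_cancel]
      have hττ : τ s = ∫ r in Set.Ioi s, φ r := by
        simp only [hτdef]; rw [max_eq_left hs.1]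
      rw [hττ]
    rw [h1, intervalIntegral.integral_comp_sub_left (fun x => R x * τ (t - x)) t,
      sub_self, sub_zero, intervalIntegral.integral_of_le ht, hCdef]
  -- conclude
  rw [hC']
  have := hsplit
  rw [hreal] at this
  linarith [this]
end

section
/- Let ζ̄ : [0,∞) → [0,∞) be integrable and let (ζ_n)_{n≥1} be measurable functions with 0 ≤ ζ_n(t) ≤ ζ̄(t) for all n, t and ∫₀^∞ ζ_n(t) dt → b as n → ∞ for some b ≥ 0. Let Z : [0,1] → [0,∞) be continuous and let (Z_n)_{n≥1} be bounded measurable functions [0,1] → [0,∞) with sup_{t∈[0,1]} |Z_n(t) − Z(t)| → 0 as n → ∞. Define Ŝ_n(t) := ∫₀^{nt} ζ_n(s) Z_n(t − s/n) ds for t ∈ [0,1]. Then: (a) for every δ ∈ (0,1], sup_{t∈[δ,1]} |Ŝ_n(t) − b Z(t)| → 0 as n → ∞; (b) if Z(0) = 0 then sup_{t∈[0,1]} |Ŝ_n(t) − b Z(t)| → 0 as n → ∞; (c) conversely, if b > 0 and sup_{t∈[0,1]} |Ŝ_n(t) − b Z(t)| → 0 as n → ∞, then Z(0) = 0. -/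
open MeasureTheory Set Filter

set_option maxHeartbeats 3200000 in
/-- with `Ŝ_n(t) = ∫₀^{nt} ζ_n(s) Z_n(t − s/n) ds`:
(a) `Ŝ_n → b·Z` uniformly on `[δ,1]` for every `δ ∈ (0,1]`;
(b) if `Z(0) = 0` then `Ŝ_n → b·Z` uniformly on `[0,1]`;
(c) if `b > 0` and `Ŝ_n → b·Z` uniformly on `[0,1]`, then `Z(0) = 0`. -/
theorem stmt16 (ζbar : ℝ → ℝ) (ζ : ℕ → ℝ → ℝ) (b : ℝ) (Z : ℝ → ℝ) (Zn : ℕ → ℝ → ℝ)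
    (hζbar_meas : Measurable ζbar)
    (hζbar_pos : ∀ t, 0 ≤ t → 0 ≤ ζbar t)
    (hζbar_int : IntegrableOn ζbar (Set.Ioi 0))
    (hζmeas : ∀ n, Measurable (ζ n))
    (hζ : ∀ n t, 0 ≤ t → 0 ≤ ζ n t ∧ ζ n t ≤ ζbar t)
    (hb : 0 ≤ b)
    (hblim : Tendsto (fun n : ℕ => ∫ t in Set.Ioi (0:ℝ), ζ n t) atTop (nhds b))
    (hZcont : ContinuousOn Z (Set.Icc 0 1))
    (hZpos : ∀ t ∈ Set.Icc (0:ℝ) 1, 0 ≤ Z t)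
    (hZn_meas : ∀ n, Measurable (Zn n))
    (hZn_pos : ∀ n, ∀ t ∈ Set.Icc (0:ℝ) 1, 0 ≤ Zn n t)
    (hZn_bdd : ∀ n, ∃ M : ℝ, ∀ t ∈ Set.Icc (0:ℝ) 1, Zn n t ≤ M)
    (hZconv : TendstoUniformlyOn Zn Z atTop (Set.Icc 0 1)) :
    (∀ δ : ℝ, 0 < δ → δ ≤ 1 →
      TendstoUniformlyOn
        (fun (n : ℕ) (t : ℝ) => ∫ s in (0:ℝ)..((n:ℝ) * t), ζ n s * Zn n (t - s / n))
        (fun t => b * Z t) atTop (Set.Icc δ 1)) ∧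
    (Z 0 = 0 →
      TendstoUniformlyOn
        (fun (n : ℕ) (t : ℝ) => ∫ s in (0:ℝ)..((n:ℝ) * t), ζ n s * Zn n (t - s / n))
        (fun t => b * Z t) atTop (Set.Icc 0 1)) ∧
    (0 < b →
      TendstoUniformlyOn
        (fun (n : ℕ) (t : ℝ) => ∫ s in (0:ℝ)..((n:ℝ) * t), ζ n s * Zn n (t - s / n))
        (fun t => b * Z t) atTop (Set.Icc 0 1) →
      Z 0 = 0) := by
  -- integrability of ζ n on Ioi 0
  have hζint : ∀ n, IntegrableOn (ζ n) (Set.Ioi (0:ℝ)) := by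
    intro n
    refine MeasureTheory.Integrable.mono hζbar_int
      (hζmeas n).aestronglyMeasurable.restrict ?_
    refine (ae_restrict_iff' measurableSet_Ioi).2 (Filter.Eventually.of_forall fun s hs => ?_)
    have h := hζ n s (le_of_lt hs)
    rw [Real.norm_eq_abs, Real.norm_eq_abs, abs_of_nonneg h.1,
      abs_of_nonneg (hζbar_pos s (le_of_lt hs))]
    exact h.2
  -- bound for Z
  obtain ⟨MZ0, hMZ0⟩ := isCompact_Icc.exists_bound_of_continuousOn hZcont
  obtain ⟨MZ, hMZdef⟩ : ∃ x : ℝ, x = max MZ0 0 := ⟨_, rfl⟩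
  have hMZnn : 0 ≤ MZ := hMZdef ▸ le_max_right _ _
  have hMZ : ∀ t ∈ Set.Icc (0:ℝ) 1, |Z t| ≤ MZ := fun t ht =>
    hMZdef ▸ le_trans (hMZ0 t ht) (le_max_left _ _)
  obtain ⟨C1, hC1def⟩ : ∃ x : ℝ, x = ∫ s in Set.Ioi (0:ℝ), ζbar s := ⟨_, rfl⟩
  have hC1nn : 0 ≤ C1 := by
    rw [hC1def]
    exact setIntegral_nonneg measurableSet_Ioi (fun s hs => hζbar_pos s (le_of_lt hs))
  -- splitting of integrals over Ioi 0
  have hsplit : ∀ (f : ℝ → ℝ), IntegrableOn f (Set.Ioi (0:ℝ)) → ∀ B : ℝ, 0 ≤ B →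
      (∫ s in Set.Ioi (0:ℝ), f s) = (∫ s in Set.Ioc 0 B, f s) + ∫ s in Set.Ioi B, f s := by
    intro f hf B hB
    rw [← Set.Ioc_union_Ioi_eq_Ioi hB,
      setIntegral_union (Set.Ioc_disjoint_Ioi le_rfl) measurableSet_Ioi
        (hf.mono_set Set.Ioc_subset_Ioi_self) (hf.mono_set (Set.Ioi_subset_Ioi hB))]
  -- tails of ζbar are small
  have htail : ∀ ε : ℝ, 0 < ε → ∃ A : ℝ, 0 < A ∧ ∀ B, A ≤ B →
      (∫ s in Set.Ioi B, ζbar s) < ε := by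
    intro ε hε
    have h := intervalIntegral_tendsto_integral_Ioi (μ := volume) 0 hζbar_int tendsto_id
    rw [Metric.tendsto_atTop] at h
    obtain ⟨A0, hA0⟩ := h ε hε
    refine ⟨max A0 1, by positivity, fun B hB => ?_⟩
    have hB0 : (0:ℝ) ≤ B := le_trans (by positivity) hB
    have h1 := hA0 B (le_trans (le_max_left _ _) hB)
    simp only [id_eq] at h1
    rw [Real.dist_eq, intervalIntegral.integral_of_le hB0] at h1
    have h2 := hsplit ζbar hζbar_int B hB0
    have h3 := abs_lt.1 h1
    linarith [h3.1, h3.2]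
  -- main estimate
  have key : ∀ ε : ℝ, 0 < ε → ∃ N : ℕ, ∀ n ≥ N, ∀ t ∈ Set.Icc (0:ℝ) 1,
      |(∫ s in (0:ℝ)..((n:ℝ) * t), ζ n s * Zn n (t - s / n)) -
        Z t * ∫ s in (0:ℝ)..((n:ℝ) * t), ζ n s| ≤ ε := by
    intro ε hε
    obtain ⟨ε₁, hε₁def⟩ : ∃ x : ℝ, x = ε/(3*(3*C1+1)) := ⟨_, rfl⟩
    have hε₁ : 0 < ε₁ := by rw [hε₁def]; exact div_pos hε (by nlinarith)
    have h31 : (3*C1+1) ≠ 0 := ne_of_gt (by linarith)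
    have hε₁C1 : ε₁ * (3*C1+1) = ε/3 := by rw [hε₁def]; field_simp
    obtain ⟨τ, hτdef⟩ : ∃ x : ℝ, x = ε/(3*(ε₁+2*MZ+1)) := ⟨_, rfl⟩
    have hτpos : 0 < τ := by rw [hτdef]; exact div_pos hε (by nlinarith)
    have hτeq : τ * (ε₁+2*MZ+1) = ε/3 := by
      rw [hτdef]; field_simp
    obtain ⟨A, hA, hAtail⟩ := htail τ hτpos
    obtain ⟨δ, hδ, hδZ⟩ := Metric.uniformContinuousOn_iff.1
      (isCompact_Icc.uniformContinuousOn_of_continuous hZcont) ε₁ hε₁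
    obtain ⟨N₂, hN₂⟩ := eventually_atTop.1 (Metric.tendstoUniformlyOn_iff.1 hZconv ε₁ hε₁)
    obtain ⟨N₁, hN₁⟩ := exists_nat_gt (A/δ)
    refine ⟨max N₁ N₂ + 1, fun n hn t ht => ?_⟩
    have hn1 : 1 ≤ n := le_trans (Nat.le_add_left 1 _) hn
    have hnpos : (0:ℝ) < n := by exact_mod_cast Nat.pos_of_ne_zero (by omega)
    have hnN₁ : (N₁:ℝ) ≤ n := by exact_mod_cast Nat.cast_le.2 (by omega : N₁ ≤ n)
    have hnN₂ : N₂ ≤ n := by omega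
    obtain ⟨ht0, ht1⟩ := ht
    have hnt : (0:ℝ) ≤ (n:ℝ) * t := mul_nonneg hnpos.le ht0
    have hAδ : A < (n:ℝ) * δ := by
      have := (div_lt_iff₀ hδ).1 hN₁; nlinarith
    have harg : ∀ s ∈ Set.Ioc (0:ℝ) ((n:ℝ)*t), t - s/(n:ℝ) ∈ Set.Icc (0:ℝ) 1 := by
      intro s hs
      have h1 : s/(n:ℝ) ≤ t := by
        rw [div_le_iff₀ hnpos]; nlinarith [hs.2]
      have h2 : 0 < s/(n:ℝ) := div_pos hs.1 hnpos
      exact ⟨by linarith, by linarith⟩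
    obtain ⟨M0, hM0⟩ := hZn_bdd n
    have hMn : ∀ u ∈ Set.Icc (0:ℝ) 1, |Zn n u| ≤ max M0 0 := fun u hu => by
      rw [abs_of_nonneg (hZn_pos n u hu)]; exact le_trans (hM0 u hu) (le_max_left _ _)
    have hmeas1 : Measurable fun s => ζ n s * Zn n (t - s/(n:ℝ)) :=
      (hζmeas n).mul ((hZn_meas n).comp (measurable_const.sub (measurable_id.div_const _)))
    have hint1 : IntegrableOn (fun s => ζ n s * Zn n (t - s/(n:ℝ)))
        (Set.Ioc 0 ((n:ℝ)*t)) := by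
      refine Integrable.mono (g := fun s => ζbar s * max M0 0)
        (((hζbar_int.mono_set Set.Ioc_subset_Ioi_self)).mul_const (max M0 0))
        hmeas1.aestronglyMeasurable.restrict ?_
      refine (ae_restrict_iff' measurableSet_Ioc).2 (Filter.Eventually.of_forall fun s hs => ?_)
      have hu := harg s hs
      have hz := hζ n s hs.1.le
      have hZnu := hMn _ hu
      rw [Real.norm_eq_abs, Real.norm_eq_abs, abs_mul, abs_mul, abs_of_nonneg hz.1,
        abs_of_nonneg (hζbar_pos s hs.1.le), abs_of_nonneg (le_max_right M0 0)]
      exact mul_le_mul hz.2 hZnu (abs_nonneg _) (hζbar_pos s hs.1.le)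
    have hint2 : IntegrableOn (fun s => ζ n s * Z t) (Set.Ioc 0 ((n:ℝ)*t)) :=
      ((hζint n).mono_set Set.Ioc_subset_Ioi_self).mul_const _
    have hii1 : IntervalIntegrable (fun s => ζ n s * Zn n (t - s/(n:ℝ))) volume 0 ((n:ℝ)*t) :=
      (intervalIntegrable_iff_integrableOn_Ioc_of_le hnt).2 hint1
    have hii2 : IntervalIntegrable (fun s => ζ n s * Z t) volume 0 ((n:ℝ)*t) :=
      (intervalIntegrable_iff_integrableOn_Ioc_of_le hnt).2 hint2
    set G : ℝ → ℝ := fun s => ζbar s * (ε₁ + if s ≤ A then ε₁ else 2*MZ) with hGdef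
    have hGmeas : Measurable G := by
      refine hζbar_meas.mul (measurable_const.add
        (Measurable.ite ?_ measurable_const measurable_const))
      exact measurableSet_Iic
    have hfac_nn : ∀ s : ℝ, (0:ℝ) ≤ ε₁ + if s ≤ A then ε₁ else 2*MZ := by
      intro s; split <;> linarith
    have hfac_le : ∀ s : ℝ, (ε₁ + if s ≤ A then ε₁ else 2*MZ) ≤ 2*ε₁ + 2*MZ := by
      intro s; split <;> linarith
    have hGnn : ∀ s, 0 ≤ s → 0 ≤ G s := fun s hs =>
      mul_nonneg (hζbar_pos s hs) (hfac_nn s)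
    have hK : (0:ℝ) ≤ 2*ε₁ + 2*MZ := by linarith
    have hGint : IntegrableOn G (Set.Ioi (0:ℝ)) := by
      refine Integrable.mono (g := fun s => ζbar s * (2*ε₁ + 2*MZ))
        (hζbar_int.mul_const _) hGmeas.aestronglyMeasurable.restrict ?_
      refine (ae_restrict_iff' measurableSet_Ioi).2 (Filter.Eventually.of_forall fun s hs => ?_)
      rw [Real.norm_eq_abs, Real.norm_eq_abs, abs_of_nonneg (hGnn s (le_of_lt hs)),
        abs_of_nonneg (mul_nonneg (hζbar_pos s (le_of_lt hs)) hK)]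
      exact mul_le_mul_of_nonneg_left (hfac_le s) (hζbar_pos s (le_of_lt hs))
    have heq : (∫ s in (0:ℝ)..((n:ℝ) * t), ζ n s * Zn n (t - s / n)) -
        Z t * ∫ s in (0:ℝ)..((n:ℝ) * t), ζ n s =
        ∫ s in (0:ℝ)..((n:ℝ) * t), (ζ n s * Zn n (t - s/(n:ℝ)) - ζ n s * Z t) := by
      rw [intervalIntegral.integral_sub hii1 hii2, intervalIntegral.integral_mul_const]
      ring
    rw [heq]
    have hptwise : ∀ s ∈ Set.Ioc (0:ℝ) ((n:ℝ)*t),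
        ‖ζ n s * Zn n (t - s/(n:ℝ)) - ζ n s * Z t‖ ≤ G s := by
      intro s hs
      have hu := harg s hs
      have hz := hζ n s hs.1.le
      have hZnu : |Zn n (t - s/(n:ℝ)) - Z (t - s/(n:ℝ))| < ε₁ := by
        have := hN₂ n hnN₂ (t - s/(n:ℝ)) hu
        rw [Real.dist_eq, abs_sub_comm] at this
        exact this
      have hZu : |Z (t - s/(n:ℝ)) - Z t| ≤ if s ≤ A then ε₁ else 2*MZ := by
        split
        · rename_i hsA
          have h2 : 0 < s/(n:ℝ) := div_pos hs.1 hnpos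
          have h3 : s/(n:ℝ) < δ := by
            rw [div_lt_iff₀ hnpos]; nlinarith
          have hd : dist (t - s/(n:ℝ)) t < δ := by
            rw [Real.dist_eq]
            have he : t - s/(n:ℝ) - t = -(s/(n:ℝ)) := by ring
            rw [he, abs_neg, abs_of_pos h2]; exact h3
          have := hδZ _ hu _ ⟨ht0, ht1⟩ hd
          rw [Real.dist_eq] at this
          exact this.le
        · have h1 := hMZ _ hu
          have h2 := hMZ t ⟨ht0, ht1⟩
          calc |Z (t - s/(n:ℝ)) - Z t| ≤ |Z (t - s/(n:ℝ))| + |Z t| := abs_sub _ _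
            _ ≤ 2*MZ := by linarith
      have hsum : |Zn n (t - s/(n:ℝ)) - Z t| ≤ ε₁ + if s ≤ A then ε₁ else 2*MZ := by
        have he : Zn n (t - s/(n:ℝ)) - Z t =
            (Zn n (t - s/(n:ℝ)) - Z (t - s/(n:ℝ))) + (Z (t - s/(n:ℝ)) - Z t) := by ring
        calc |Zn n (t - s/(n:ℝ)) - Z t|
            ≤ |Zn n (t - s/(n:ℝ)) - Z (t - s/(n:ℝ))| + |Z (t - s/(n:ℝ)) - Z t| := by
              rw [he]; exact abs_add_le _ _
          _ ≤ ε₁ + if s ≤ A then ε₁ else 2*MZ := add_le_add hZnu.le hZu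
      rw [Real.norm_eq_abs, ← mul_sub, abs_mul, abs_of_nonneg hz.1]
      calc ζ n s * |Zn n (t - s/(n:ℝ)) - Z t|
          ≤ ζbar s * (ε₁ + if s ≤ A then ε₁ else 2*MZ) :=
            mul_le_mul hz.2 hsum (abs_nonneg _) (hζbar_pos s hs.1.le)
        _ = G s := rfl
    have hGii : IntervalIntegrable G volume 0 ((n:ℝ)*t) :=
      (intervalIntegrable_iff_integrableOn_Ioc_of_le hnt).2
        (hGint.mono_set Set.Ioc_subset_Ioi_self)
    have hbd1 : |∫ s in (0:ℝ)..((n:ℝ) * t), (ζ n s * Zn n (t - s/(n:ℝ)) - ζ n s * Z t)| ≤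
        |∫ s in (0:ℝ)..((n:ℝ) * t), G s| := by
      rw [← Real.norm_eq_abs (∫ s in (0:ℝ)..((n:ℝ) * t), _)]
      refine intervalIntegral.norm_integral_le_abs_of_norm_le ?_ hGii
      rw [Set.uIoc_of_le hnt]
      exact (ae_restrict_iff' measurableSet_Ioc).2 (Filter.Eventually.of_forall hptwise)
    refine le_trans hbd1 ?_
    have hGnonneg_int : (0:ℝ) ≤ ∫ s in (0:ℝ)..((n:ℝ) * t), G s :=
      intervalIntegral.integral_nonneg hnt (fun u hu => hGnn u hu.1)
    rw [abs_of_nonneg hGnonneg_int, intervalIntegral.integral_of_le hnt]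
    have hmono1 : (∫ s in Set.Ioc (0:ℝ) ((n:ℝ)*t), G s) ≤ ∫ s in Set.Ioi (0:ℝ), G s :=
      setIntegral_mono_set hGint
        ((ae_restrict_iff' measurableSet_Ioi).2 (Filter.Eventually.of_forall
          (fun s hs => hGnn s (le_of_lt hs))))
        (Set.Ioc_subset_Ioi_self).eventuallyLE
    have hsp := hsplit G hGint A hA.le
    have hhead : (∫ s in Set.Ioc (0:ℝ) A, G s) ≤ 2*ε₁*C1 := by
      have h1 : (∫ s in Set.Ioc (0:ℝ) A, G s) ≤ ∫ s in Set.Ioc (0:ℝ) A, ζbar s * (2*ε₁) := by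
        refine setIntegral_mono_on (hGint.mono_set Set.Ioc_subset_Ioi_self)
          ((hζbar_int.mono_set Set.Ioc_subset_Ioi_self).mul_const _) measurableSet_Ioc ?_
        intro s hs
        have he : G s = ζbar s * (2*ε₁) := by
          rw [hGdef]; simp only [if_pos hs.2]; ring
        exact le_of_eq he
      have h2 : (∫ s in Set.Ioc (0:ℝ) A, ζbar s * (2*ε₁)) =
          (∫ s in Set.Ioc (0:ℝ) A, ζbar s) * (2*ε₁) := integral_mul_const _ _
      have h3 : (∫ s in Set.Ioc (0:ℝ) A, ζbar s) ≤ C1 := by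
        rw [hC1def]
        exact setIntegral_mono_set hζbar_int
          ((ae_restrict_iff' measurableSet_Ioi).2 (Filter.Eventually.of_forall
            (fun s hs => hζbar_pos s (le_of_lt hs))))
          (Set.Ioc_subset_Ioi_self).eventuallyLE
      calc (∫ s in Set.Ioc (0:ℝ) A, G s) ≤ (∫ s in Set.Ioc (0:ℝ) A, ζbar s) * (2*ε₁) :=
          h1.trans (le_of_eq h2)
        _ ≤ C1 * (2*ε₁) := mul_le_mul_of_nonneg_right h3 (by linarith)
        _ = 2*ε₁*C1 := by ring
    have htl : (∫ s in Set.Ioi A, G s) ≤ (ε₁ + 2*MZ) * τ := by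
      have h1 : (∫ s in Set.Ioi A, G s) ≤ ∫ s in Set.Ioi A, ζbar s * (ε₁ + 2*MZ) := by
        refine setIntegral_mono_on (hGint.mono_set (Set.Ioi_subset_Ioi hA.le))
          ((hζbar_int.mono_set (Set.Ioi_subset_Ioi hA.le)).mul_const _) measurableSet_Ioi ?_
        intro s hs
        exact le_of_eq (by rw [hGdef]; simp only [if_neg (not_le.2 (Set.mem_Ioi.1 hs))])
      have h2 : (∫ s in Set.Ioi A, ζbar s * (ε₁ + 2*MZ)) =
          (∫ s in Set.Ioi A, ζbar s) * (ε₁ + 2*MZ) := integral_mul_const _ _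
      have h3 := hAtail A le_rfl
      have h4 : (0:ℝ) ≤ ε₁ + 2*MZ := by linarith
      calc (∫ s in Set.Ioi A, G s) ≤ (∫ s in Set.Ioi A, ζbar s) * (ε₁ + 2*MZ) :=
          h1.trans (le_of_eq h2)
        _ ≤ τ * (ε₁ + 2*MZ) := mul_le_mul_of_nonneg_right h3.le h4
        _ = (ε₁ + 2*MZ) * τ := by ring
    have hfinal1 : 2*ε₁*C1 ≤ ε/3 := by
      have hx : ε₁*(3*C1+1) = 3*(ε₁*C1) + ε₁ := by ring
      have hy : 0 ≤ ε₁*C1 := mul_nonneg hε₁.le hC1nn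
      linarith
    have hfinal2 : (ε₁ + 2*MZ) * τ ≤ ε/3 := by
      have hx : τ*(ε₁+2*MZ+1) = (ε₁+2*MZ)*τ + τ := by ring
      linarith
    linarith
  -- convergence of mass for t ≥ δ
  have key2 : ∀ ε : ℝ, 0 < ε → ∀ δ : ℝ, 0 < δ → ∃ N : ℕ, ∀ n ≥ N, ∀ t : ℝ, δ ≤ t →
      |(∫ s in (0:ℝ)..((n:ℝ) * t), ζ n s) - b| < ε := by
    intro ε hε δ hδ
    obtain ⟨A, hA, hAtail⟩ := htail (ε/2) (by positivity)
    obtain ⟨N₃, hN₃⟩ := Metric.tendsto_atTop.1 hblim (ε/2) (by positivity)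
    obtain ⟨N₄, hN₄⟩ := exists_nat_gt (A/δ)
    refine ⟨max N₃ N₄, fun n hn t htδ => ?_⟩
    have hnN₄ : (N₄:ℝ) ≤ n := by exact_mod_cast Nat.cast_le.2 (le_trans (le_max_right _ _) hn)
    have hAn : A < (n:ℝ) * δ := by
      have := (div_lt_iff₀ hδ).1 hN₄
      nlinarith
    have ht0 : 0 ≤ t := le_trans hδ.le htδ
    have hnt : (0:ℝ) ≤ (n:ℝ) * t := mul_nonneg (Nat.cast_nonneg n) ht0
    have hAnt : A ≤ (n:ℝ) * t := by nlinarith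
    rw [intervalIntegral.integral_of_le hnt]
    have hsp := hsplit (ζ n) (hζint n) ((n:ℝ)*t) hnt
    have htail0 : 0 ≤ ∫ s in Set.Ioi ((n:ℝ)*t), ζ n s :=
      setIntegral_nonneg measurableSet_Ioi (fun s hs => (hζ n s (le_trans hnt (le_of_lt hs))).1)
    have htail1 : (∫ s in Set.Ioi ((n:ℝ)*t), ζ n s) ≤ ∫ s in Set.Ioi ((n:ℝ)*t), ζbar s :=
      setIntegral_mono_on ((hζint n).mono_set (Set.Ioi_subset_Ioi hnt))
        (hζbar_int.mono_set (Set.Ioi_subset_Ioi hnt)) measurableSet_Ioi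
        (fun s hs => (hζ n s (le_trans hnt (le_of_lt hs))).2)
    have htail2 := hAtail ((n:ℝ)*t) hAnt
    have hdist := hN₃ n (le_trans (le_max_left _ _) hn)
    rw [Real.dist_eq] at hdist
    have hd := abs_lt.1 hdist
    rw [abs_lt]
    constructor <;> nlinarith [hd.1, hd.2]
  -- crude global bound on mass
  have key3 : ∀ n : ℕ, ∀ t ∈ Set.Icc (0:ℝ) 1,
      |(∫ s in (0:ℝ)..((n:ℝ) * t), ζ n s) - b| ≤ C1 + b := by
    intro n t ht
    have hnt : (0:ℝ) ≤ (n:ℝ) * t := mul_nonneg (Nat.cast_nonneg n) ht.1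
    rw [intervalIntegral.integral_of_le hnt]
    have h0 : 0 ≤ ∫ s in Set.Ioc (0:ℝ) ((n:ℝ)*t), ζ n s :=
      setIntegral_nonneg measurableSet_Ioc (fun s hs => (hζ n s hs.1.le).1)
    have h1 : (∫ s in Set.Ioc (0:ℝ) ((n:ℝ)*t), ζ n s) ≤
        ∫ s in Set.Ioc (0:ℝ) ((n:ℝ)*t), ζbar s :=
      setIntegral_mono_on ((hζint n).mono_set Set.Ioc_subset_Ioi_self)
        (hζbar_int.mono_set Set.Ioc_subset_Ioi_self) measurableSet_Ioc
        (fun s hs => (hζ n s hs.1.le).2)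
    have h2 : (∫ s in Set.Ioc (0:ℝ) ((n:ℝ)*t), ζbar s) ≤ C1 := by
      rw [hC1def]
      exact setIntegral_mono_set hζbar_int
        ((ae_restrict_iff' measurableSet_Ioi).2 (Filter.Eventually.of_forall
          (fun s hs => hζbar_pos s (le_of_lt hs))))
        (Set.Ioc_subset_Ioi_self).eventuallyLE
    rw [abs_le]
    constructor <;> linarith
  -- triangle-type estimate
  have est : ∀ (n : ℕ) (t : ℝ),
      |b * Z t - ∫ s in (0:ℝ)..((n:ℝ) * t), ζ n s * Zn n (t - s / n)| ≤
      |(∫ s in (0:ℝ)..((n:ℝ) * t), ζ n s * Zn n (t - s / n)) -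
        Z t * ∫ s in (0:ℝ)..((n:ℝ) * t), ζ n s| +
      |Z t| * |(∫ s in (0:ℝ)..((n:ℝ) * t), ζ n s) - b| := by
    intro n t
    have hring : b * Z t - (∫ s in (0:ℝ)..((n:ℝ) * t), ζ n s * Zn n (t - s / n)) =
        -((((∫ s in (0:ℝ)..((n:ℝ) * t), ζ n s * Zn n (t - s / n)) -
            Z t * ∫ s in (0:ℝ)..((n:ℝ) * t), ζ n s)) +
          Z t * ((∫ s in (0:ℝ)..((n:ℝ) * t), ζ n s) - b)) := by ring
    rw [hring, abs_neg]
    refine le_trans (abs_add_le _ _) ?_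
    rw [abs_mul]
  -- part (a) in explicit form
  have parta : ∀ δ : ℝ, 0 < δ → ∀ ε : ℝ, 0 < ε → ∃ N : ℕ, ∀ n ≥ N, ∀ t : ℝ, δ ≤ t → t ≤ 1 →
      |b * Z t - ∫ s in (0:ℝ)..((n:ℝ) * t), ζ n s * Zn n (t - s / n)| < ε := by
    intro δ hδ ε hε
    obtain ⟨N₁, hkey⟩ := key (ε/2) (by positivity)
    obtain ⟨N₂, hkey2⟩ := key2 (ε/(2*(MZ+1))) (div_pos hε (by linarith)) δ hδ
    refine ⟨max N₁ N₂, fun n hn t ht1 ht2 => ?_⟩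
    have htI : t ∈ Set.Icc (0:ℝ) 1 := ⟨le_trans hδ.le ht1, ht2⟩
    have h1 := hkey n (le_trans (le_max_left _ _) hn) t htI
    have h2 := hkey2 n (le_trans (le_max_right _ _) hn) t ht1
    have hZt := hMZ t htI
    have h3 : |Z t| * |(∫ s in (0:ℝ)..((n:ℝ) * t), ζ n s) - b| ≤ MZ * (ε/(2*(MZ+1))) :=
      mul_le_mul hZt h2.le (abs_nonneg _) hMZnn
    have hq : MZ * (ε/(2*(MZ+1))) < ε/2 := by
      have hne : (MZ+1) ≠ 0 := ne_of_gt (by linarith)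
      have hx : (ε/(2*(MZ+1))) * (MZ+1) = ε/2 := by field_simp
      have hy : 0 < ε/(2*(MZ+1)) := div_pos hε (by linarith)
      nlinarith
    refine lt_of_le_of_lt (est n t) ?_
    linarith
  refine ⟨?_, ?_, ?_⟩
  · -- (a)
    intro δ hδ hδ1
    rw [Metric.tendstoUniformlyOn_iff]
    intro ε hε
    obtain ⟨N, hN⟩ := parta δ hδ ε hε
    rw [eventually_atTop]
    exact ⟨N, fun n hn t ht => by rw [Real.dist_eq]; exact hN n hn t ht.1 ht.2⟩
  · -- (b)
    intro hZ0
    rw [Metric.tendstoUniformlyOn_iff]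
    intro ε hε
    obtain ⟨δ0, hδ0, hδ0Z⟩ := Metric.continuousWithinAt_iff.1
      (hZcont 0 ⟨le_rfl, zero_le_one⟩) (ε/(2*(C1+b+1))) (div_pos hε (by linarith))
    obtain ⟨N₁, hN₁⟩ := parta (δ0/2) (by positivity) ε hε
    obtain ⟨N₂, hN₂⟩ := key (ε/2) (by positivity)
    rw [eventually_atTop]
    refine ⟨max N₁ N₂, fun n hn t ht => ?_⟩
    rw [Real.dist_eq]
    rcases le_or_gt (δ0/2) t with hcase | hcase
    · exact hN₁ n (le_trans (le_max_left _ _) hn) t hcase ht.2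
    · -- small t
      have hdist : dist t 0 < δ0 := by
        rw [Real.dist_eq, sub_zero, abs_of_nonneg ht.1]; linarith
      have hZt : |Z t| < ε/(2*(C1+b+1)) := by
        have h := hδ0Z ht hdist
        rwa [Real.dist_eq, hZ0, sub_zero] at h
      have h1 := hN₂ n (le_trans (le_max_right _ _) hn) t ht
      have h2 := key3 n t ht
      have h3 : |Z t| * |(∫ s in (0:ℝ)..((n:ℝ) * t), ζ n s) - b| ≤
          (ε/(2*(C1+b+1))) * (C1+b) :=
        mul_le_mul hZt.le h2 (abs_nonneg _) (by positivity)
      have hq : (ε/(2*(C1+b+1))) * (C1+b) < ε/2 := by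
        have hne : (C1+b+1) ≠ 0 := ne_of_gt (by linarith)
        have hx : (ε/(2*(C1+b+1))) * (C1+b+1) = ε/2 := by field_simp
        have hy : 0 < ε/(2*(C1+b+1)) := div_pos hε (by linarith)
        nlinarith
      refine lt_of_le_of_lt (est n t) ?_
      linarith
  · -- (c)
    intro hbpos huconv
    have h := Metric.tendstoUniformlyOn_iff.1 huconv
    have h0 : ∀ ε : ℝ, 0 < ε → |b| * |Z 0| < ε := by
      intro ε hε
      obtain ⟨n, hn⟩ := (h ε hε).exists
      have h2 := hn 0 ⟨le_rfl, zero_le_one⟩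
      simpa [Real.dist_eq, intervalIntegral.integral_same, abs_mul] using h2
    have hz : b * Z 0 = 0 := by
      by_contra hne
      have hlt := h0 (|b| * |Z 0|) (by rw [← abs_mul]; exact abs_pos.2 hne)
      exact lt_irrefl _ hlt
    exact (mul_eq_zero.1 hz).resolve_left (ne_of_gt hbpos)
end

section
/- Let ζ̄ : [0,∞) → [0,∞) be integrable and let (ζ_n)_{n≥1} be measurable functions with 0 ≤ ζ_n(t) ≤ ζ̄(t) for all n, t and ∫₀^∞ ζ_n(t) dt → b as n → ∞ for some b ≥ 0. Let Z : [0,1] → [0,∞) be continuous and let (Z_n)_{n≥1} be bounded measurable functions [0,1] → [0,∞) with sup_{t∈[0,1]} |Z_n(t) − Z(t)| → 0 as n → ∞. Define Ŝ_n(t) := ∫₀^{nt} ζ_n(s) Z_n(t − s/n) ds and ψ̂_n(t) := Z_n(0) ∫_{nt}^∞ ζ_n(s) ds for t ∈ [0,1]. Then sup_{t∈[0,1]} | ψ̂_n(t) + Ŝ_n(t) − b Z(t) | → 0 as n → ∞. -/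
open MeasureTheory Set Filter

lemma split_tail (f : ℝ → ℝ) (hint : IntegrableOn f (Ioi 0)) (a : ℝ) (ha : 0 ≤ a) :
    ∫ s in Ioi (0:ℝ), f s = (∫ s in Ioc (0:ℝ) a, f s) + ∫ s in Ioi a, f s := by
  rw [← Ioc_union_Ioi_eq_Ioi ha,
    setIntegral_union (Ioc_disjoint_Ioi le_rfl) measurableSet_Ioi
      (hint.mono_set (by rw [← Ioc_union_Ioi_eq_Ioi ha]; exact subset_union_left))
      (hint.mono_set (by rw [← Ioc_union_Ioi_eq_Ioi ha]; exact subset_union_right))]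

lemma tail_tendsto (f : ℝ → ℝ) (hint : IntegrableOn f (Ioi 0)) (δ : ℝ) (hδ : 0 < δ) :
    Tendsto (fun n : ℕ => ∫ s in Ici ((n:ℝ) * δ), f s) atTop (nhds 0) := by
  have hU : (⋃ n : ℕ, Ioc (0:ℝ) ((n:ℝ) * δ)) = Ioi 0 := by
    ext x
    simp only [mem_iUnion, mem_Ioc, mem_Ioi]
    constructor
    · rintro ⟨n, h1, _⟩; exact h1
    · intro hx
      obtain ⟨n, hn⟩ := exists_nat_ge (x / δ)
      exact ⟨n, hx, by rw [div_le_iff₀ hδ] at hn; linarith⟩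
  have hmono : Monotone (fun n : ℕ => Ioc (0:ℝ) ((n:ℝ) * δ)) := by
    intro n m hnm
    exact Ioc_subset_Ioc le_rfl (by
      have : (n:ℝ) ≤ m := Nat.cast_le.2 hnm
      nlinarith)
  have h1 : Tendsto (fun n : ℕ => ∫ s in Ioc (0:ℝ) ((n:ℝ)*δ), f s) atTop
      (nhds (∫ s in Ioi (0:ℝ), f s)) := by
    have := tendsto_setIntegral_of_monotone (fun n : ℕ => measurableSet_Ioc) hmono
      (by rw [hU]; exact hint)
    rwa [hU] at this
  have h2 : ∀ n : ℕ, ∫ s in Ici ((n:ℝ)*δ), f s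
      = (∫ s in Ioi (0:ℝ), f s) - ∫ s in Ioc (0:ℝ) ((n:ℝ)*δ), f s := by
    intro n
    rw [integral_Ici_eq_integral_Ioi, split_tail f hint ((n:ℝ)*δ) (by positivity)]
    ring
  simp only [h2]
  have := (tendsto_const_nhds (x := ∫ s in Ioi (0:ℝ), f s) (f := atTop (α := ℕ))).sub h1
  simpa using this

theorem stmt17 (ζbar : ℝ → ℝ) (ζ : ℕ → ℝ → ℝ) (b : ℝ) (Z : ℝ → ℝ) (Zn : ℕ → ℝ → ℝ)
    (hζbar_meas : Measurable ζbar)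
    (hζbar_pos : ∀ t, 0 ≤ t → 0 ≤ ζbar t)
    (hζbar_int : IntegrableOn ζbar (Set.Ioi 0))
    (hζmeas : ∀ n, Measurable (ζ n))
    (hζ : ∀ n t, 0 ≤ t → 0 ≤ ζ n t ∧ ζ n t ≤ ζbar t)
    (hb : 0 ≤ b)
    (hblim : Tendsto (fun n : ℕ => ∫ t in Set.Ioi (0:ℝ), ζ n t) atTop (nhds b))
    (hZcont : ContinuousOn Z (Set.Icc 0 1))
    (hZpos : ∀ t ∈ Set.Icc (0:ℝ) 1, 0 ≤ Z t)
    (hZn_meas : ∀ n, Measurable (Zn n))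
    (hZn_pos : ∀ n, ∀ t ∈ Set.Icc (0:ℝ) 1, 0 ≤ Zn n t)
    (hZn_bdd : ∀ n, ∃ M : ℝ, ∀ t ∈ Set.Icc (0:ℝ) 1, Zn n t ≤ M)
    (hZconv : TendstoUniformlyOn Zn Z atTop (Set.Icc 0 1)) :
    TendstoUniformlyOn
      (fun (n : ℕ) (t : ℝ) =>
        Zn n 0 * (∫ s in Set.Ioi ((n:ℝ) * t), ζ n s)
          + ∫ s in (0:ℝ)..((n:ℝ) * t), ζ n s * Zn n (t - s / n))
      (fun t => b * Z t) atTop (Set.Icc 0 1) := by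
  obtain ⟨M0, hM0⟩ := isCompact_Icc.exists_bound_of_continuousOn hZcont
  set M : ℝ := max M0 1 with hMdef
  have hM1 : (1:ℝ) ≤ M := le_max_right _ _
  have hMpos : (0:ℝ) < M := lt_of_lt_of_le one_pos hM1
  have hZM : ∀ t ∈ Icc (0:ℝ) 1, |Z t| ≤ M := fun t ht =>
    le_trans (hM0 t ht) (le_max_left _ _)
  set I : ℝ := ∫ s in Ioi (0:ℝ), ζbar s with hIdef
  have hInn : 0 ≤ I :=
    setIntegral_nonneg measurableSet_Ioi (fun x hx => hζbar_pos x (le_of_lt hx))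
  set K : ℝ := I + M + 1 with hKdef
  have hK : 0 < K := by positivity
  have hIK : I ≤ K := by nlinarith
  have hMK : M ≤ K := by nlinarith
  rw [Metric.tendstoUniformlyOn_iff]
  intro ε' hε'
  set e1 : ℝ := ε' / (8 * K) with he1def
  have he1 : 0 < e1 := by positivity
  have hUC := isCompact_Icc.uniformContinuousOn_of_continuous hZcont
  rw [Metric.uniformContinuousOn_iff] at hUC
  obtain ⟨δ, hδ, hδZ⟩ := hUC e1 he1
  set e2 : ℝ := ε' / (8 * (e1 + 4 * M + 1)) with he2def
  have he2 : 0 < e2 := by positivity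
  set e3 : ℝ := ε' / (8 * M) with he3def
  have he3 : 0 < e3 := by positivity
  have hq1 : e1 * K = ε' / 8 := by
    rw [he1def]; field_simp
  have hq2 : (e1 + 4 * M + 1) * e2 = ε' / 8 := by
    have hne : e1 + 4 * M + 1 ≠ 0 := by positivity
    rw [he2def]; field_simp
  have hq3 : M * e3 = ε' / 8 := by
    rw [he3def]; field_simp
  rw [Metric.tendstoUniformlyOn_iff] at hZconv
  have hτev : ∀ᶠ n : ℕ in atTop, |∫ s in Ici ((n:ℝ) * δ), ζbar s| < e2 := by
    have := Metric.tendsto_nhds.mp (tail_tendsto ζbar hζbar_int δ hδ) e2 he2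
    simpa [Real.dist_eq] using this
  have hbev : ∀ᶠ n : ℕ in atTop, |(∫ s in Ioi (0:ℝ), ζ n s) - b| < e3 := by
    have := Metric.tendsto_nhds.mp hblim e3 he3
    simpa [Real.dist_eq] using this
  filter_upwards [hZconv e1 he1, hτev, hbev, eventually_ge_atTop 1] with n hZn1 hτn hbn hn1
  intro t ht
  obtain ⟨ht0, ht1⟩ := ht
  have hnpos : (0:ℝ) < n := by exact_mod_cast hn1
  have hnt : (0:ℝ) ≤ (n:ℝ) * t := by positivity
  rw [intervalIntegral.integral_of_le hnt]
  set τ : ℝ := ∫ s in Ici ((n:ℝ) * δ), ζbar s with hτdef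
  have hτnn : 0 ≤ τ := setIntegral_nonneg measurableSet_Ici (fun x hx =>
    hζbar_pos x (le_trans (by positivity) hx))
  have hτe2 : τ < e2 := lt_of_le_of_lt (le_abs_self _) hτn
  have hIciIoi : Ici ((n:ℝ)*δ) ⊆ Ioi 0 := fun x hx =>
    lt_of_lt_of_le (by positivity : (0:ℝ) < (n:ℝ)*δ) hx
  have hζbar_ae : ∀ (s : Set ℝ), s ⊆ Ioi 0 → MeasurableSet s →
      (0:ℝ → ℝ) ≤ᵐ[volume.restrict s] ζbar := by
    intro s hs hsm
    exact (ae_restrict_iff' hsm).2 (ae_of_all _ fun x hx => hζbar_pos x (le_of_lt (hs hx)))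
  have hζn_int : IntegrableOn (ζ n) (Ioi 0) := by
    refine Integrable.mono' hζbar_int (hζmeas n).aestronglyMeasurable ?_
    refine (ae_restrict_iff' measurableSet_Ioi).2 (ae_of_all _ fun s hs => ?_)
    rw [Real.norm_eq_abs, abs_of_nonneg (hζ n s (le_of_lt hs)).1]
    exact (hζ n s (le_of_lt hs)).2
  have hζn_Ioc : IntegrableOn (ζ n) (Ioc 0 ((n:ℝ)*t)) :=
    hζn_int.mono_set Ioc_subset_Ioi_self
  have hζbar_Ioc : IntegrableOn ζbar (Ioc 0 ((n:ℝ)*t)) :=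
    hζbar_int.mono_set Ioc_subset_Ioi_self
  have hmem : ∀ s ∈ Ioc (0:ℝ) ((n:ℝ)*t), t - s / n ∈ Icc (0:ℝ) 1 := by
    intro s hs
    obtain ⟨hs0, hsnt⟩ := hs
    constructor
    · have : s / n ≤ t := by rw [div_le_iff₀ hnpos]; linarith [hsnt]
      linarith
    · have : 0 < s / n := by positivity
      linarith
  obtain ⟨Mn, hMn⟩ := hZn_bdd n
  have hS_meas : Measurable (fun s => ζ n s * Zn n (t - s / n)) :=
    (hζmeas n).mul ((hZn_meas n).comp (measurable_const.sub (measurable_id.div_const _)))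
  have hS_int : IntegrableOn (fun s => ζ n s * Zn n (t - s / n)) (Ioc 0 ((n:ℝ)*t)) := by
    refine Integrable.mono' (hζbar_Ioc.mul_const (max Mn 0)) hS_meas.aestronglyMeasurable ?_
    refine (ae_restrict_iff' measurableSet_Ioc).2 (ae_of_all _ fun s hs => ?_)
    have hu := hmem s hs
    have h1 : 0 ≤ ζ n s := (hζ n s (le_of_lt hs.1)).1
    have h2 : ζ n s ≤ ζbar s := (hζ n s (le_of_lt hs.1)).2
    have h3 : 0 ≤ Zn n (t - s / n) := hZn_pos n _ hu
    have h4 : Zn n (t - s / n) ≤ max Mn 0 := le_trans (hMn _ hu) (le_max_left _ _)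
    rw [Real.norm_eq_abs, abs_of_nonneg (mul_nonneg h1 h3)]
    exact mul_le_mul h2 h4 h3 (hζbar_pos s (le_of_lt hs.1))
  set T : ℝ := ∫ s in Ioi ((n:ℝ)*t), ζ n s with hTdef
  set C : ℝ := ∫ s in Ioc (0:ℝ) ((n:ℝ)*t), ζ n s with hCdef
  set S : ℝ := ∫ s in Ioc (0:ℝ) ((n:ℝ)*t), ζ n s * Zn n (t - s / n) with hSdef
  set bn : ℝ := ∫ s in Ioi (0:ℝ), ζ n s with hbndef
  have hsplit : bn = C + T := split_tail (ζ n) hζn_int _ hnt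
  have hζn_Ioi_nt : IntegrableOn (ζ n) (Ioi ((n:ℝ)*t)) :=
    hζn_int.mono_set (Ioi_subset_Ioi hnt)
  have hζbar_Ioi_nt : IntegrableOn ζbar (Ioi ((n:ℝ)*t)) :=
    hζbar_int.mono_set (Ioi_subset_Ioi hnt)
  have hTnn : 0 ≤ T := setIntegral_nonneg measurableSet_Ioi (fun x hx =>
    (hζ n x (le_trans hnt (le_of_lt hx))).1)
  have hTle : ∀ (A : Set ℝ), MeasurableSet A → Ioi ((n:ℝ)*t) ⊆ A → A ⊆ Ioi 0 →
      IntegrableOn ζbar A → T ≤ ∫ s in A, ζbar s := by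
    intro A hAm hsub hsub' hAint
    calc T ≤ ∫ s in Ioi ((n:ℝ)*t), ζbar s :=
          setIntegral_mono_on hζn_Ioi_nt hζbar_Ioi_nt measurableSet_Ioi
            (fun x hx => (hζ n x (le_trans hnt (le_of_lt hx))).2)
      _ ≤ ∫ s in A, ζbar s :=
          setIntegral_mono_set hAint (hζbar_ae A hsub' hAm)
            (HasSubset.Subset.eventuallyLE hsub)
  have hTI : T ≤ I :=
    hTle (Ioi 0) measurableSet_Ioi (Ioi_subset_Ioi hnt) (fun x hx => hx) hζbar_int
  have hZapprox : ∀ x ∈ Icc (0:ℝ) 1, |Zn n x - Z x| ≤ e1 := by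
    intro x hx
    have := hZn1 x hx
    rw [Real.dist_eq, abs_sub_comm] at this
    exact this.le
  have h0mem : (0:ℝ) ∈ Icc (0:ℝ) 1 := ⟨le_refl _, zero_le_one⟩
  have htmem : t ∈ Icc (0:ℝ) 1 := ⟨ht0, ht1⟩
  -- Term 1
  have hterm1 : |Zn n 0 - Z t| * T ≤ 2 * e1 * I + (e1 + 2 * M) * τ := by
    have hd : |Zn n 0 - Z t| ≤ e1 + |Z 0 - Z t| := by
      calc |Zn n 0 - Z t| ≤ |Zn n 0 - Z 0| + |Z 0 - Z t| := abs_sub_le _ _ _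
        _ ≤ e1 + |Z 0 - Z t| := by linarith [hZapprox 0 h0mem]
    by_cases hcase : t < δ
    · have hZ0t : |Z 0 - Z t| ≤ e1 := by
        have hdd : dist (0:ℝ) t < δ := by
          rw [Real.dist_eq, abs_of_nonpos (by linarith)]; linarith
        have := hδZ 0 h0mem t htmem hdd
        rw [Real.dist_eq] at this; exact this.le
      have h5 : |Zn n 0 - Z t| * T ≤ (e1 + e1) * T :=
        mul_le_mul_of_nonneg_right (by linarith) hTnn
      have h6 : (e1 + e1) * T ≤ (e1 + e1) * I :=
        mul_le_mul_of_nonneg_left hTI (by linarith)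
      have h7 : 0 ≤ (e1 + 2 * M) * τ := mul_nonneg (by linarith) hτnn
      have h8 : (e1 + e1) * I = 2 * e1 * I := by ring
      linarith
    · push_neg at hcase
      have hTτ : T ≤ τ := by
        refine hTle (Ici ((n:ℝ)*δ)) measurableSet_Ici ?_ hIciIoi
          (hζbar_int.mono_set hIciIoi)
        intro x hx
        have h9 : (n:ℝ) * δ ≤ (n:ℝ) * t :=
          mul_le_mul_of_nonneg_left hcase (le_of_lt hnpos)
        exact le_trans h9 (le_of_lt hx)
      have hZ0t : |Z 0 - Z t| ≤ 2 * M := by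
        calc |Z 0 - Z t| ≤ |Z 0| + |Z t| := abs_sub _ _
          _ ≤ M + M := add_le_add (hZM 0 h0mem) (hZM t htmem)
          _ = 2 * M := by ring
      have h5 : |Zn n 0 - Z t| * T ≤ (e1 + 2*M) * T :=
        mul_le_mul_of_nonneg_right (by linarith) hTnn
      have h6 : (e1 + 2*M) * T ≤ (e1 + 2*M) * τ :=
        mul_le_mul_of_nonneg_left hTτ (by linarith)
      have h7 : 0 ≤ 2 * e1 * I := by positivity
      linarith
  -- Term 2
  have hterm2 : |S - Z t * C| ≤ 2 * e1 * I + 2 * M * τ := by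
    have hconst_int : IntegrableOn (fun s => ζ n s * Z t) (Ioc 0 ((n:ℝ)*t)) :=
      hζn_Ioc.mul_const _
    have heq : S - Z t * C = ∫ s in Ioc (0:ℝ) ((n:ℝ)*t),
        (ζ n s * Zn n (t - s / n) - ζ n s * Z t) := by
      rw [integral_sub hS_int hconst_int, hSdef]
      congr 1
      rw [hCdef, mul_comm, ← integral_mul_const]
    have hind_int : IntegrableOn
        ((Ici ((n:ℝ)*δ)).indicator (fun s => ζbar s * (2*M))) (Ioc 0 ((n:ℝ)*t)) :=
      (hζbar_Ioc.mul_const (2*M)).indicator measurableSet_Ici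
    have hg_int : IntegrableOn (fun s => ζbar s * (e1 + e1)
        + (Ici ((n:ℝ)*δ)).indicator (fun s => ζbar s * (2*M)) s) (Ioc 0 ((n:ℝ)*t)) :=
      (hζbar_Ioc.mul_const _).add hind_int
    have hbound : ∀ s ∈ Ioc (0:ℝ) ((n:ℝ)*t),
        ‖ζ n s * Zn n (t - s / n) - ζ n s * Z t‖ ≤ ζbar s * (e1 + e1)
          + (Ici ((n:ℝ)*δ)).indicator (fun s => ζbar s * (2*M)) s := by
      intro s hs
      have hu := hmem s hs
      have h1 : 0 ≤ ζ n s := (hζ n s (le_of_lt hs.1)).1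
      have h2 : ζ n s ≤ ζbar s := (hζ n s (le_of_lt hs.1)).2
      have hbar : 0 ≤ ζbar s := hζbar_pos s (le_of_lt hs.1)
      have hfac : ‖ζ n s * Zn n (t - s / n) - ζ n s * Z t‖
          = ζ n s * |Zn n (t - s / n) - Z t| := by
        rw [Real.norm_eq_abs, ← mul_sub, abs_mul, abs_of_nonneg h1]
      rw [hfac]
      have hd : |Zn n (t - s / n) - Z t| ≤ e1 + |Z (t - s / n) - Z t| := by
        calc |Zn n (t - s / n) - Z t|
            ≤ |Zn n (t - s / n) - Z (t - s / n)| + |Z (t - s / n) - Z t| := abs_sub_le _ _ _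
          _ ≤ e1 + |Z (t - s / n) - Z t| := by linarith [hZapprox _ hu]
      by_cases hcase : s < (n:ℝ) * δ
      · have hdist : dist (t - s / n) t < δ := by
          rw [Real.dist_eq]
          have h7 : t - s / n - t = -(s / n) := by ring
          rw [h7, abs_neg, abs_of_nonneg (div_nonneg hs.1.le hnpos.le),
            div_lt_iff₀ hnpos]
          linarith [mul_comm ((n:ℝ)) δ]
        have hZut : |Z (t - s / n) - Z t| ≤ e1 := by
          have := hδZ _ hu t htmem hdist
          rw [Real.dist_eq] at this; exact this.le
        have hindz : (Ici ((n:ℝ)*δ)).indicator (fun s => ζbar s * (2*M)) s = 0 :=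
          indicator_of_notMem (by simpa using hcase) _
        rw [hindz, add_zero]
        exact mul_le_mul h2 (by linarith) (abs_nonneg _) hbar
      · push_neg at hcase
        have hindz : (Ici ((n:ℝ)*δ)).indicator (fun s => ζbar s * (2*M)) s
            = ζbar s * (2*M) := indicator_of_mem (mem_Ici.2 hcase) _
        rw [hindz]
        have hZut : |Z (t - s / n) - Z t| ≤ 2 * M := by
          calc |Z (t - s / n) - Z t| ≤ |Z (t - s / n)| + |Z t| := abs_sub _ _
            _ ≤ M + M := add_le_add (hZM _ hu) (hZM t htmem)
            _ = 2 * M := by ring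
        calc ζ n s * |Zn n (t - s / n) - Z t| ≤ ζbar s * (e1 + e1 + 2*M) := by
              apply mul_le_mul h2 (by linarith) (abs_nonneg _) hbar
          _ = ζbar s * (e1 + e1) + ζbar s * (2*M) := by ring
    have hkey : |S - Z t * C| ≤ ∫ s in Ioc (0:ℝ) ((n:ℝ)*t), (ζbar s * (e1 + e1)
        + (Ici ((n:ℝ)*δ)).indicator (fun s => ζbar s * (2*M)) s) := by
      rw [heq, ← Real.norm_eq_abs]
      exact norm_integral_le_of_norm_le hg_int
        ((ae_restrict_iff' measurableSet_Ioc).2 (ae_of_all _ hbound))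
    have hsum : ∫ s in Ioc (0:ℝ) ((n:ℝ)*t), (ζbar s * (e1 + e1)
        + (Ici ((n:ℝ)*δ)).indicator (fun s => ζbar s * (2*M)) s)
        = (∫ s in Ioc (0:ℝ) ((n:ℝ)*t), ζbar s) * (e1 + e1)
          + ∫ s in Ici ((n:ℝ)*δ) ∩ Ioc (0:ℝ) ((n:ℝ)*t), ζbar s * (2*M) := by
      rw [integral_add (hζbar_Ioc.mul_const _) hind_int, integral_mul_const]
      congr 1
      rw [integral_indicator measurableSet_Ici, Measure.restrict_restrict measurableSet_Ici]
    have hA : (∫ s in Ioc (0:ℝ) ((n:ℝ)*t), ζbar s) ≤ I :=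
      setIntegral_mono_set hζbar_int (hζbar_ae _ (fun x hx => hx) measurableSet_Ioi)
        (HasSubset.Subset.eventuallyLE Ioc_subset_Ioi_self)
    have hB : (∫ s in Ici ((n:ℝ)*δ) ∩ Ioc (0:ℝ) ((n:ℝ)*t), ζbar s * (2*M)) ≤ τ * (2*M) := by
      have h10 : IntegrableOn (fun s => ζbar s * (2*M)) (Ici ((n:ℝ)*δ)) :=
        (hζbar_int.mono_set hIciIoi).mul_const _
      have h11 : (0:ℝ → ℝ) ≤ᵐ[volume.restrict (Ici ((n:ℝ)*δ))]
          (fun s => ζbar s * (2*M)) := by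
        refine (ae_restrict_iff' measurableSet_Ici).2 (ae_of_all _ fun x hx => ?_)
        have := hζbar_pos x (le_of_lt (hIciIoi hx))
        positivity
      have h12 := setIntegral_mono_set h10 h11
        (HasSubset.Subset.eventuallyLE
          (inter_subset_left : Ici ((n:ℝ)*δ) ∩ Ioc (0:ℝ) ((n:ℝ)*t) ⊆ Ici ((n:ℝ)*δ)))
      rw [show (∫ x in Ici ((n:ℝ)*δ), ζbar x * (2*M)) = τ * (2*M) from
        integral_mul_const _ _] at h12
      exact h12
    have h12 : (∫ s in Ioc (0:ℝ) ((n:ℝ)*t), ζbar s) * (e1 + e1) ≤ I * (e1 + e1) :=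
      mul_le_mul_of_nonneg_right hA (by linarith)
    have h13 : I * (e1 + e1) = 2 * e1 * I := by ring
    have h14 : τ * (2*M) = 2 * M * τ := by ring
    linarith [hkey, hsum.le, hsum.ge]
  -- final assembly
  rw [Real.dist_eq]
  have hEeq : b * Z t - (Zn n 0 * T + S)
      = -((Zn n 0 - Z t) * T + (S - Z t * C) + (bn - b) * Z t) := by
    rw [hsplit]; ring
  have habs : |b * Z t - (Zn n 0 * T + S)|
      ≤ |Zn n 0 - Z t| * T + |S - Z t * C| + |bn - b| * M := by
    rw [hEeq, abs_neg]
    calc |(Zn n 0 - Z t) * T + (S - Z t * C) + (bn - b) * Z t|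
        ≤ |(Zn n 0 - Z t) * T| + |S - Z t * C| + |(bn - b) * Z t| := abs_add_three _ _ _
      _ ≤ |Zn n 0 - Z t| * T + |S - Z t * C| + |bn - b| * M := by
          refine add_le_add (add_le_add ?_ le_rfl) ?_
          · rw [abs_mul, abs_of_nonneg hTnn]
          · rw [abs_mul]
            exact mul_le_mul_of_nonneg_left (hZM t htmem) (abs_nonneg _)
  have hfin1 : e1 * I ≤ ε' / 8 :=
    le_trans (mul_le_mul_of_nonneg_left hIK he1.le) hq1.le
  have hfin2 : (e1 + 4 * M) * τ < ε' / 8 := by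
    have h15 : (e1 + 4 * M) * τ ≤ (e1 + 4 * M + 1) * τ :=
      mul_le_mul_of_nonneg_right (by linarith) hτnn
    have h16 : (e1 + 4 * M + 1) * τ < (e1 + 4 * M + 1) * e2 :=
      mul_lt_mul_of_pos_left hτe2 (by positivity)
    exact lt_of_le_of_lt h15 (lt_of_lt_of_le h16 hq2.le)
  have hfin3 : |bn - b| * M < ε' / 8 := by
    have h17 : |bn - b| * M < e3 * M := mul_lt_mul_of_pos_right hbn hMpos
    have h18 : e3 * M = ε' / 8 := by rw [mul_comm]; exact hq3
    exact lt_of_lt_of_le h17 h18.le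
  calc |b * Z t - (Zn n 0 * T + S)|
      ≤ |Zn n 0 - Z t| * T + |S - Z t * C| + |bn - b| * M := habs
    _ ≤ (2 * e1 * I + (e1 + 2 * M) * τ) + (2 * e1 * I + 2 * M * τ) + |bn - b| * M :=
        add_le_add (add_le_add hterm1 hterm2) le_rfl
    _ = 4 * (e1 * I) + (e1 + 4 * M) * τ + |bn - b| * M := by ring
    _ < 4 * (ε' / 8) + ε' / 8 + ε' / 8 :=
        add_lt_add (add_lt_add_of_le_of_lt
          (mul_le_mul_of_nonneg_left hfin1 (by norm_num : (0:ℝ) ≤ 4)) hfin2) hfin3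
    _ ≤ ε' := by linarith
end
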